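/- arXiv:2511.06193 — 7 statements merged into one kernel-verified Lean document; each statement's English description precedes it below -/
import Mathlib

section
/- Let q be a prime power, k ≥ 2 and s ≥ 0 integers. Every (n, k+s-1)-multi-arc K in PG(k-1, q) satisfies n ≤ (s+1)(q+1) + k - 2. -/
open scoped Classical

noncomputable section

/-- The number of points of the multiset `K` of projective points lying in the
submodule (flat) `W`, counted with multiplicity. -/
def mPointsOn {F V : Type*} [Field F] [AddCommGroup V] [Module F V]
    (K : Multiset (Projectivization F V)) (W : Submodule F V) : ℕ :=
  Multiset.card (K.filter (fun P => P.submodule ≤ W))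

/-- The number of points of the finite set `K` of projective points lying in the
submodule (flat) `W`. -/
def pointsOn {F V : Type*} [Field F] [AddCommGroup V] [Module F V]
    (K : Finset (Projectivization F V)) (W : Submodule F V) : ℕ :=
  (K.filter (fun P => P.submodule ≤ W)).card

/-- `W` is a hyperplane of the projective space `PG(V)`, i.e. a linear subspace of
codimension one (projective codimension one flat). -/
def IsHyp (F : Type*) [Field F] {V : Type*} [AddCommGroup V] [Module F V]
    (W : Submodule F V) : Prop :=
  Module.finrank F W = Module.finrank F V - 1

/-- An `(n, r)`-multi-arc: a multiset of `n > r` projective points such that every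
hyperplane contains at most `r` of them (with multiplicity) and some hyperplane
contains exactly `r` of them. -/
def IsMultiArc {F V : Type*} [Field F] [AddCommGroup V] [Module F V]
    (n r : ℕ) (K : Multiset (Projectivization F V)) : Prop :=
  Multiset.card K = n ∧ r < n ∧
    (∀ W : Submodule F V, IsHyp F W → mPointsOn K W ≤ r) ∧
    (∃ W : Submodule F V, IsHyp F W ∧ mPointsOn K W = r)

/-- An `(n, r)`-arc: a set of `n > r` projective points such that every hyperplane
contains at most `r` of them and some hyperplane contains exactly `r` of them. -/
def IsArc {F V : Type*} [Field F] [AddCommGroup V] [Module F V]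
    (n r : ℕ) (K : Finset (Projectivization F V)) : Prop :=
  K.card = n ∧ r < n ∧
    (∀ W : Submodule F V, IsHyp F W → pointsOn K W ≤ r) ∧
    (∃ W : Submodule F V, IsHyp F W ∧ pointsOn K W = r)

/-- A complete `(n, r)`-arc: one admitting no extension to an `(n+1, r)`-arc. -/
def IsCompleteArc {F V : Type*} [Field F] [AddCommGroup V] [Module F V]
    (n r : ℕ) (K : Finset (Projectivization F V)) : Prop :=
  IsArc n r K ∧ ∀ P ∉ K, ¬ IsArc (n + 1) r (insert P K)

/-- A hyperplane is a secant of the arc `K` (relative to the parameter `r`) if it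
contains exactly `r` points of `K`. -/
def IsSecant {F V : Type*} [Field F] [AddCommGroup V] [Module F V]
    (K : Finset (Projectivization F V)) (r : ℕ) (W : Submodule F V) : Prop :=
  IsHyp F W ∧ pointsOn K W = r

/-- A hyperplane is a tangent of the arc `K` (relative to the parameter `r`) if it
contains a positive number, fewer than `r`, of points of `K`. -/
def IsTangent {F V : Type*} [Field F] [AddCommGroup V] [Module F V]
    (K : Finset (Projectivization F V)) (r : ℕ) (W : Submodule F V) : Prop :=
  IsHyp F W ∧ 0 < pointsOn K W ∧ pointsOn K W < r

/-- `m^s(k,q)`: the maximum size of a complete `(n, k+s-1)`-arc in `PG(k-1,q)`,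
where the projective space is coordinatized over the field `F` of order `q`. -/
def mPow (F : Type*) [Field F] (k s : ℕ) : ℕ :=
  sSup {n | ∃ K : Finset (Projectivization F (Fin k → F)), IsCompleteArc n (k + s - 1) K}

/-! Pick a subspace `U` of codimension two through `k - 2` points of `K`, and let `m ≥ k - 2`
be the number of points of `K` on it. The hyperplanes through `U` are the preimages of the
`q + 1` points of the projective line `ℙ(V ⧸ U)`; they cover `K`, and each holds the `m` points
on `U` plus at most `r - m` others, where `r = k + s - 1`. Hence `n + q m ≤ (q + 1) r`. -/

open Module Submodule

theorem Multiset.card_le_sum_card_filter {α ι : Type*} [Fintype ι] (p : ι → α → Prop)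
    [∀ i, DecidablePred (p i)] (B : Multiset α) (hB : ∀ a ∈ B, ∃ i, p i a) :
    card B ≤ ∑ i, card (B.filter (p i)) := by
  induction B using Multiset.induction_on with
  | empty => simp
  | cons a B ih =>
    obtain ⟨i, hi⟩ := hB a (Multiset.mem_cons_self a B)
    have hcons : ∀ j, card ((a ::ₘ B).filter (p j)) =
        card (B.filter (p j)) + if p j a then 1 else 0 := by
      intro j
      by_cases hj : p j a <;> simp [hj]
    simp only [hcons, Finset.sum_add_distrib, Multiset.card_cons]
    gcongr
    · exact ih fun b hb => hB b (Multiset.mem_cons_of_mem hb)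
    · exact le_trans (by simp [hi])
        (Finset.single_le_sum (fun j _ => Nat.zero_le _) (Finset.mem_univ i))

theorem Submodule.exists_le_finrank_eq {F V : Type*} [Field F] [AddCommGroup V] [Module F V]
    [FiniteDimensional F V] (S : Submodule F V) {d : ℕ} (hSd : finrank F S ≤ d)
    (hd : d ≤ finrank F V) : ∃ T : Submodule F V, S ≤ T ∧ finrank F T = d := by
  induction d, hSd using Nat.le_induction with
  | base => exact ⟨S, le_rfl, rfl⟩
  | succ d hSd ih =>
    obtain ⟨T, hST, rfl⟩ := ih (by omega)
    obtain ⟨v, hv⟩ := T.exists_of_finrank_lt (by omega)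
    have hvT : v ∉ T := by simpa using hv 1 one_ne_zero
    exact ⟨T ⊔ span F {v}, hST.trans le_sup_left, finrank_sup_span_singleton hvT⟩

section MultiArc

variable {F V : Type*} [Field F] [AddCommGroup V] [Module F V]

theorem mPointsOn_add_card_filter_not_le (K : Multiset (Projectivization F V))
    {U W : Submodule F V} (h : U ≤ W) :
    mPointsOn K U + Multiset.card
      ((K.filter fun P => ¬ P.submodule ≤ U).filter fun P => P.submodule ≤ W) =
      mPointsOn K W := by
  rw [mPointsOn, mPointsOn, ← Multiset.filter_add_not (fun P => P.submodule ≤ U)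
    (K.filter fun P => P.submodule ≤ W), Multiset.card_add, Multiset.filter_filter,
    Multiset.filter_filter, Multiset.filter_filter]
  congr 2
  · exact Multiset.filter_congr fun _ _ => ⟨fun hP => ⟨hP, hP.trans h⟩, And.left⟩
  · exact Multiset.filter_congr fun _ _ => And.comm

theorem exists_finrank_eq_le_mPointsOn [FiniteDimensional F V]
    (K : Multiset (Projectivization F V)) {d : ℕ} (hdV : d ≤ finrank F V)
    (hdK : d ≤ Multiset.card K) :
    ∃ U : Submodule F V, finrank F U = d ∧ d ≤ mPointsOn K U := by
  obtain ⟨T, hT⟩ := Multiset.card_pos_iff_exists_mem.mp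
    (by rw [Multiset.card_powersetCard]; exact Nat.choose_pos hdK)
  obtain ⟨hTK, hTd⟩ := Multiset.mem_powersetCard.mp hT
  let S := span F ((T.map Projectivization.rep).toFinset : Set V)
  have hSd : finrank F S ≤ d := calc
    finrank F S ≤ (T.map Projectivization.rep).toFinset.card := finrank_span_finset_le_card _
    _ ≤ d := by simpa [hTd] using (T.map Projectivization.rep).toFinset_card_le
  obtain ⟨U, hSU, hU⟩ := S.exists_le_finrank_eq hSd hdV
  refine ⟨U, hU, hTd ▸ Multiset.card_le_card
    (Multiset.le_filter.mpr ⟨hTK, fun P hP => ?_⟩)⟩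
  rw [P.submodule_eq, span_singleton_le_iff_mem]
  exact hSU (subset_span (by simpa using ⟨P, hP, rfl⟩))

theorem finrank_comap_mkQ_submodule [FiniteDimensional F V] (U : Submodule F V)
    (x : Projectivization F (V ⧸ U)) :
    finrank F (comap U.mkQ x.submodule) = finrank F U + 1 := by
  obtain ⟨v, hv⟩ := U.mkQ_surjective x.rep
  have hvU : v ∉ U := fun h => x.rep_nonzero (by rwa [← hv, mkQ_apply, Quotient.mk_eq_zero])
  rw [x.submodule_eq, ← hv, ← Set.image_singleton, ← map_span, comap_map_eq, ker_mkQ,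
    sup_comm, finrank_sup_span_singleton hvU]

theorem exists_submodule_le_comap_mkQ {U : Submodule F V} (P : Projectivization F V)
    (hP : ¬ P.submodule ≤ U) :
    ∃ x : Projectivization F (V ⧸ U), P.submodule ≤ comap U.mkQ x.submodule := by
  have hP0 : U.mkQ P.rep ≠ 0 := by
    rwa [mkQ_apply, Ne, Quotient.mk_eq_zero, ← span_singleton_le_iff_mem, ← P.submodule_eq]
  refine ⟨Projectivization.mk F _ hP0, ?_⟩
  rw [P.submodule_eq, span_singleton_le_iff_mem, mem_comap, Projectivization.submodule_mk]
  exact mem_span_singleton_self _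

theorem card_add_mul_mPointsOn_le [Fintype F] [FiniteDimensional F V]
    (K : Multiset (Projectivization F V)) {U : Submodule F V} (hU : finrank F (V ⧸ U) = 2)
    {r : ℕ} (hr : ∀ W : Submodule F V, IsHyp F W → mPointsOn K W ≤ r) :
    Multiset.card K + Fintype.card F * mPointsOn K U ≤ (Fintype.card F + 1) * r := by
  have : Finite (V ⧸ U) := Module.finite_of_finite F
  have : Fintype (Projectivization F (V ⧸ U)) := Fintype.ofFinite _
  set m := mPointsOn K U
  set B := K.filter fun P => ¬ P.submodule ≤ U
  let H (x : Projectivization F (V ⧸ U)) : Submodule F V := comap U.mkQ x.submodule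
  have hK : Multiset.card K = m + Multiset.card B := by
    simp only [m, B, mPointsOn, ← Multiset.card_add, Multiset.filter_add_not]
  have hcover :
      Multiset.card B ≤ ∑ x, Multiset.card (B.filter fun P => P.submodule ≤ H x) :=
    Multiset.card_le_sum_card_filter _ B
      fun P hP => exists_submodule_le_comap_mkQ P (Multiset.mem_filter.mp hP).2
  have hline : Fintype.card (Projectivization F (V ⧸ U)) = Fintype.card F + 1 := by
    simpa [Nat.card_eq_fintype_card] using Projectivization.card_of_finrank_two F (V ⧸ U) hU
  have hH : ∀ x, m + Multiset.card (B.filter fun P => P.submodule ≤ H x) ≤ r := by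
    intro x
    have hUH : U ≤ H x := fun v hv => by
      simp only [H, mem_comap, mkQ_apply, (Quotient.mk_eq_zero U).mpr hv, zero_mem]
    rw [mPointsOn_add_card_filter_not_le K hUH]
    refine hr _ ?_
    have := U.finrank_quotient_add_finrank
    rw [IsHyp, finrank_comap_mkQ_submodule]
    omega
  calc Multiset.card K + Fintype.card F * m
      ≤ (Fintype.card F + 1) * m +
          ∑ x, Multiset.card (B.filter fun P => P.submodule ≤ H x) := by
        rw [hK]; linarith
    _ = ∑ x, (m + Multiset.card (B.filter fun P => P.submodule ≤ H x)) := by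
        rw [Finset.sum_add_distrib, Finset.sum_const, Finset.card_univ, hline, smul_eq_mul]
    _ ≤ ∑ _x : Projectivization F (V ⧸ U), r := Finset.sum_le_sum fun x _ => hH x
    _ = (Fintype.card F + 1) * r := by
        rw [Finset.sum_const, Finset.card_univ, hline, smul_eq_mul]

end MultiArc

/-- Every `(n, k+s-1)`-multi-arc in `PG(k-1, q)` satisfies
`n ≤ (s+1)(q+1) + k - 2`. -/
theorem stmt0 {F : Type*} [Field F] [Fintype F] {q k s n : ℕ}
    (hq : Fintype.card F = q) (hk : 2 ≤ k)
    (K : Multiset (Projectivization F (Fin k → F)))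
    (hK : IsMultiArc n (k + s - 1) K) :
    n ≤ (s + 1) * (q + 1) + k - 2 := by
  obtain ⟨hcard, hrn, hr, -⟩ := hK
  have hV : finrank F (Fin k → F) = k := finrank_fin_fun F
  obtain ⟨U, hU, hUK⟩ :=
    exists_finrank_eq_le_mPointsOn K (d := k - 2) (by omega) (by omega)
  have hQ : finrank F ((Fin k → F) ⧸ U) = 2 := by
    rw [finrank_quotient, hV, hU]; omega
  have key := card_add_mul_mPointsOn_le K hQ hr
  rw [hcard, hq] at key
  obtain ⟨j, rfl⟩ : ∃ j, k = j + 2 := ⟨k - 2, by omega⟩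
  have : q * j ≤ q * mPointsOn K U := Nat.mul_le_mul_left q (by simpa using hUK)
  rw [show j + 2 + s - 1 = j + s + 1 by omega] at key
  rw [show (s + 1) * (q + 1) + (j + 2) - 2 = (s + 1) * (q + 1) + j by omega]
  nlinarith

end
end

section
/- Let q be a prime power and s an integer with 0 < s < q-2 such that (s+2) divides q. If m^s(3,q) ≥ (s+1)(q+1), then m^s(3,q) = (s+1)(q+1) + 1. -/
open scoped Classical

noncomputable section

/-!
Write `q = |F|` and `r = t + 1`, where `t = s + 1`. Counting the `q + 1` lines through a point of
an `(n, r)`-arc gives `n + q ≤ r (q + 1)`, so `m^s(3,q) ≤ t (q + 1) + 1`. For an arc `K` of size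
`t (q + 1)` the same count shows that through every point of `K` there is exactly one line
meeting `K` in `t` points (a `t`-line), all other lines through it meeting `K` in `t + 1` points;
hence there are exactly `q + 1` lines of size `t`. Through a point outside `K` lying on no
`t`-line every line would meet `K` in `0` or `t + 1` points, forcing `t + 1 ∣ |K| = t q + t`,
which is impossible when `t + 1 ∣ q`. So the `q + 1` lines of size `t` cover the plane, and
`q + 1` lines covering `PG(2,q)` are concurrent. Their common point `Q` lies outside `K` and only
on `t`-lines, so `K ∪ {Q}` is again an arc and `K` is not complete.
-/

open Module Finset
open scoped LinearAlgebra.Projectivization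

lemma Finset.exists_add_one_eq_of_sum_add_one_eq {ι : Type*} {s : Finset ι} {f : ι → ℕ} {c : ℕ}
    (hf : ∀ i ∈ s, f i ≤ c) (hsum : ∑ i ∈ s, f i + 1 = #s * c) :
    ∃ i ∈ s, f i + 1 = c ∧ ∀ j ∈ s, j ≠ i → f j = c := by
  have hdef : ∑ i ∈ s, (c - f i) = 1 := by
    have := sum_tsub_distrib s hf
    rw [sum_const, smul_eq_mul] at this
    omega
  obtain ⟨i, hi, hi0⟩ := exists_ne_zero_of_sum_ne_zero (hdef.trans_ne one_ne_zero)
  have hsplit : (c - f i) + ∑ j ∈ s.erase i, (c - f j) = 1 := (add_sum_erase s _ hi).trans hdef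
  have hrest := sum_eq_zero_iff.1 (by omega : ∑ j ∈ s.erase i, (c - f j) = 0)
  refine ⟨i, hi, by have := hf i hi; omega, fun j hj hji => ?_⟩
  have := hrest j (mem_erase.2 ⟨hji, hj⟩)
  have := hf j hj
  omega

namespace ProjectivePlane

variable {F V : Type*} [Field F] [AddCommGroup V] [Module F V]

instance [Finite V] : Fintype (ℙ F V) := Fintype.ofFinite _

instance [Finite V] : Fintype (Submodule F V) := Fintype.ofFinite _

lemma sum_pointsOn_eq_sum_card_filter (A : Finset (ℙ F V)) (B : Finset (Submodule F V)) :
    ∑ W ∈ B, pointsOn A W = ∑ P ∈ A, #{W ∈ B | P.submodule ≤ W} := by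
  simp_rw [pointsOn, card_filter]
  exact sum_comm

lemma pointsOn_insert {K : Finset (ℙ F V)} {Q : ℙ F V} (hQ : Q ∉ K) (W : Submodule F V) :
    pointsOn (insert Q K) W = pointsOn K W + if Q.submodule ≤ W then 1 else 0 := by
  rw [pointsOn, pointsOn, filter_insert]
  split_ifs
  · exact card_insert_of_notMem fun hm => hQ (mem_filter.1 hm).1
  · rfl

lemma range_map_subtype (W : Submodule F V) :
    Set.range (Projectivization.map W.subtype W.injective_subtype) =
      {P : ℙ F V | P.submodule ≤ W} := by
  ext P
  induction P using Projectivization.ind with | h v hv =>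
  simp only [Set.mem_range, Set.mem_ofPred_eq, Projectivization.submodule_mk,
    Submodule.span_singleton_le_iff_mem]
  constructor
  · rintro ⟨P, hP⟩
    induction P using Projectivization.ind with | h w hw =>
    rw [Projectivization.map_mk, eq_comm, Projectivization.mk_eq_mk_iff'] at hP
    obtain ⟨a, rfl⟩ := hP
    exact W.smul_mem a w.2
  · intro hvW
    exact ⟨Projectivization.mk F ⟨v, hvW⟩ (by simpa using hv),
      Projectivization.map_mk _ _ _ _⟩

lemma pointsOn_univ [Finite V] (W : Submodule F V) : pointsOn univ W = Nat.card (ℙ F W) := by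
  rw [pointsOn, ← Fintype.card_subtype, ← Nat.card_eq_fintype_card, Nat.card_congr
    ((Equiv.ofInjective _ (Projectivization.map_injective _ W.injective_subtype)).trans
      (Equiv.setCongr (range_map_subtype W)))]
  rfl

lemma isHyp_iff_finrank_eq_two (hV : finrank F V = 3) {W : Submodule F V} :
    IsHyp F W ↔ finrank F W = 2 := by
  rw [IsHyp, hV]

lemma isHyp_sup_of_ne (hV : finrank F V = 3) {P Q : ℙ F V} (hPQ : P ≠ Q) :
    IsHyp F (P.submodule ⊔ Q.submodule) := by
  have hinf : finrank F ↥(P.submodule ⊓ Q.submodule) = 0 := by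
    have hlt : P.submodule ⊓ Q.submodule < P.submodule := by
      refine inf_le_left.lt_of_ne fun h => hPQ (Projectivization.submodule_injective ?_)
      exact Submodule.eq_of_le_of_finrank_eq (h ▸ inf_le_right)
        (by rw [P.finrank_submodule, Q.finrank_submodule])
    have := Submodule.finrank_lt_finrank_of_lt hlt
    rw [P.finrank_submodule] at this
    omega
  have := Submodule.finrank_sup_add_finrank_inf_eq P.submodule Q.submodule
  rw [hinf, P.finrank_submodule, Q.finrank_submodule] at this
  rw [isHyp_iff_finrank_eq_two hV]
  omega

lemma eq_of_isHyp_of_ne (hV : finrank F V = 3) {P Q : ℙ F V} (hPQ : P ≠ Q)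
    {W L : Submodule F V} (hW : IsHyp F W) (hL : IsHyp F L) (hPW : P.submodule ≤ W)
    (hQW : Q.submodule ≤ W) (hPL : P.submodule ≤ L) (hQL : Q.submodule ≤ L) : W = L := by
  simp only [← Submodule.mem_projectivization_iff_submodule_le] at hPW hQW hPL hQL
  exact Projectivization.line_unique hPQ W L ((isHyp_iff_finrank_eq_two hV).1 hW)
    ((isHyp_iff_finrank_eq_two hV).1 hL) hPW hQW hPL hQL

variable [Finite V]

def pencil (P : ℙ F V) : Finset (Submodule F V) := {W | IsHyp F W ∧ P.submodule ≤ W}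

def linesMeeting (K : Finset (ℙ F V)) (n : ℕ) : Finset (Submodule F V) :=
  {W | IsHyp F W ∧ pointsOn K W = n}

lemma filter_pencil_self (P : ℙ F V) : {W ∈ pencil P | P.submodule ≤ W} = pencil P :=
  filter_true_of_mem fun _ hW => (mem_filter.1 hW).2.2

lemma card_filter_pencil_of_ne (hV : finrank F V = 3) {P R : ℙ F V} (hRP : R ≠ P) :
    #{W ∈ pencil P | R.submodule ≤ W} = 1 := by
  refine card_eq_one.2 ⟨P.submodule ⊔ R.submodule, ?_⟩
  ext W
  simp only [pencil, mem_filter, mem_univ, true_and, mem_singleton]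
  constructor
  · rintro ⟨⟨hW, hPW⟩, hRW⟩
    exact eq_of_isHyp_of_ne hV hRP.symm hW (isHyp_sup_of_ne hV hRP.symm) hPW hRW
      le_sup_left le_sup_right
  · rintro rfl
    exact ⟨⟨isHyp_sup_of_ne hV hRP.symm, le_sup_left⟩, le_sup_right⟩

variable [Finite F]

lemma card_univ_eq (hV : finrank F V = 3) :
    #(univ : Finset (ℙ F V)) = Nat.card F ^ 2 + Nat.card F + 1 := by
  rw [card_univ, ← Nat.card_eq_fintype_card, Projectivization.card_of_finrank F V hV]
  simp only [sum_range_succ, sum_range_zero]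
  ring

lemma pointsOn_univ_of_isHyp (hV : finrank F V = 3) {W : Submodule F V} (hW : IsHyp F W) :
    pointsOn univ W = Nat.card F + 1 := by
  rw [pointsOn_univ,
    Projectivization.card_of_finrank_two F W ((isHyp_iff_finrank_eq_two hV).1 hW)]

lemma card_pencil (hV : finrank F V = 3) (P : ℙ F V) : #(pencil P) = Nat.card F + 1 := by
  have hcount := sum_pointsOn_eq_sum_card_filter univ (pencil P)
  rw [sum_congr rfl fun W hW => pointsOn_univ_of_isHyp hV (mem_filter.1 hW).2.1, sum_const,
    smul_eq_mul, ← add_sum_erase _ _ (mem_univ P), filter_pencil_self,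
    sum_congr rfl fun R hR => card_filter_pencil_of_ne hV (mem_erase.1 hR).1, sum_const,
    smul_eq_mul, mul_one, card_erase_of_mem (mem_univ P), card_univ_eq hV,
    Nat.add_sub_cancel] at hcount
  have hq : 1 < Nat.card F := Finite.one_lt_card
  refine Nat.eq_of_mul_eq_mul_right (m := Nat.card F) (by omega) ?_
  nlinarith

lemma card_filter_pencil (hV : finrank F V = 3) (P R : ℙ F V) :
    #{W ∈ pencil P | R.submodule ≤ W} = 1 + if R = P then Nat.card F else 0 := by
  split_ifs with hRP
  · rw [hRP, filter_pencil_self, card_pencil hV, add_comm]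
  · exact card_filter_pencil_of_ne hV hRP

lemma sum_pointsOn_pencil (hV : finrank F V = 3) (K : Finset (ℙ F V)) (P : ℙ F V) :
    ∑ W ∈ pencil P, pointsOn K W = #K + if P ∈ K then Nat.card F else 0 := by
  rw [sum_pointsOn_eq_sum_card_filter, sum_congr rfl fun R _ => card_filter_pencil hV P R,
    sum_add_distrib, sum_ite_eq', card_eq_sum_ones]

lemma card_add_le_mul_of_pointsOn_le (hV : finrank F V = 3) {K : Finset (ℙ F V)} {r : ℕ}
    (hK : K.Nonempty) (hmax : ∀ W : Submodule F V, IsHyp F W → pointsOn K W ≤ r) :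
    #K + Nat.card F ≤ r * (Nat.card F + 1) := by
  obtain ⟨P, hP⟩ := hK
  have := sum_le_card_nsmul (pencil P) (pointsOn K) r fun W hW => hmax W (mem_filter.1 hW).2.1
  rwa [sum_pointsOn_pencil hV, if_pos hP, card_pencil hV, smul_eq_mul, mul_comm] at this

lemma exists_one_lt_card_filter_of_card_eq (hV : finrank F V = 3) {T : Finset (Submodule F V)}
    (hT : ∀ W ∈ T, IsHyp F W) (hcard : #T = Nat.card F + 1) :
    ∃ Q : ℙ F V, 1 < #{W ∈ T | Q.submodule ≤ W} := by
  have hq : 1 < Nat.card F := Finite.one_lt_card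
  have hlt : ∑ _P : ℙ F V, 1 < ∑ P : ℙ F V, #{W ∈ T | P.submodule ≤ W} := by
    rw [← sum_pointsOn_eq_sum_card_filter,
      sum_congr rfl fun W hW => pointsOn_univ_of_isHyp hV (hT W hW), sum_const, sum_const,
      card_univ_eq hV, hcard, smul_eq_mul, smul_eq_mul]
    nlinarith
  obtain ⟨Q, -, hQ⟩ := exists_lt_of_sum_lt hlt
  exact ⟨Q, hQ⟩

lemma pencil_subset_of_covering (hV : finrank F V = 3) {T : Finset (Submodule F V)}
    (hT : ∀ W ∈ T, IsHyp F W) (hcard : #T ≤ Nat.card F + 1)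
    (hcover : ∀ P : ℙ F V, ∃ W ∈ T, P.submodule ≤ W) {Q : ℙ F V}
    (hQ : 1 < #{W ∈ T | Q.submodule ≤ W}) : pencil Q ⊆ T := by
  intro L hL
  obtain ⟨-, hL, hQL⟩ := mem_filter.1 hL
  by_contra hLT
  -- Count incidences between the `q + 1` points of `L` and the lines of `T`: every line of `T`
  -- meets `L` at most once, but every point of `L` is covered, and `Q` twice.
  have hle : ∑ W ∈ T, pointsOn {P | P.submodule ≤ L} W ≤ #T * 1 := by
    refine sum_le_card_nsmul _ _ _ fun W hW => card_le_one.2 fun P hP P' hP' => ?_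
    simp only [mem_filter, mem_univ, true_and] at hP hP'
    by_contra hne
    exact hLT (eq_of_isHyp_of_ne hV hne (hT W hW) hL hP.2 hP'.2 hP.1 hP'.1 ▸ hW)
  have hlt : ∑ _P ∈ ({P | P.submodule ≤ L} : Finset (ℙ F V)), 1 <
      ∑ P ∈ ({P | P.submodule ≤ L} : Finset (ℙ F V)), #{W ∈ T | P.submodule ≤ W} := by
    refine sum_lt_sum (fun P _ => ?_) ⟨Q, mem_filter.2 ⟨mem_univ Q, hQL⟩, hQ⟩
    obtain ⟨W, hW, hPW⟩ := hcover P
    exact card_pos.2 ⟨W, mem_filter.2 ⟨hW, hPW⟩⟩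
  rw [← sum_pointsOn_eq_sum_card_filter, ← card_eq_sum_ones] at hlt
  have := pointsOn_univ_of_isHyp hV hL
  rw [pointsOn] at this
  omega

lemma exists_eq_pencil_of_covering (hV : finrank F V = 3) {T : Finset (Submodule F V)}
    (hT : ∀ W ∈ T, IsHyp F W) (hcard : #T = Nat.card F + 1)
    (hcover : ∀ P : ℙ F V, ∃ W ∈ T, P.submodule ≤ W) : ∃ Q : ℙ F V, T = pencil Q := by
  obtain ⟨Q, hQ⟩ := exists_one_lt_card_filter_of_card_eq hV hT hcard
  refine ⟨Q, (eq_of_subset_of_card_le ?_ ?_).symm⟩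
  · exact pencil_subset_of_covering hV hT hcard.le hcover hQ
  · rw [hcard, card_pencil hV]

section LargeArc

variable {K : Finset (ℙ F V)} {t : ℕ} (hV : finrank F V = 3) (hcard : #K = t * (Nat.card F + 1))
  (hmax : ∀ W : Submodule F V, IsHyp F W → pointsOn K W ≤ t + 1)
include hV hcard hmax

lemma exists_pointsOn_pencil_of_mem {P : ℙ F V} (hP : P ∈ K) :
    ∃ W₀ ∈ pencil P, pointsOn K W₀ = t ∧
      ∀ W ∈ pencil P, W ≠ W₀ → pointsOn K W = t + 1 := by
  obtain ⟨W₀, hW₀, h₀, hother⟩ :=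
    exists_add_one_eq_of_sum_add_one_eq (s := pencil P) (c := t + 1)
      (fun W hW => hmax W (mem_filter.1 hW).2.1)
      (by rw [sum_pointsOn_pencil hV, if_pos hP, hcard, card_pencil hV]; ring)
  exact ⟨W₀, hW₀, by omega, hother⟩

lemma card_filter_linesMeeting_of_mem {P : ℙ F V} (hP : P ∈ K) :
    #{W ∈ linesMeeting K t | P.submodule ≤ W} = 1 := by
  obtain ⟨W₀, hW₀, h₀, hother⟩ := exists_pointsOn_pencil_of_mem hV hcard hmax hP
  refine card_eq_one.2 ⟨W₀, ?_⟩
  ext W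
  simp only [linesMeeting, pencil, mem_filter, mem_univ, true_and, mem_singleton]
    at hW₀ hother ⊢
  constructor
  · rintro ⟨⟨hW, hWt⟩, hPW⟩
    by_contra hne
    have := hother W ⟨hW, hPW⟩ hne
    omega
  · rintro rfl
    exact ⟨⟨hW₀.1, h₀⟩, hW₀.2⟩

lemma pointsOn_eq_zero_or_eq_or_eq {W : Submodule F V} (hW : IsHyp F W) :
    pointsOn K W = 0 ∨ pointsOn K W = t ∨ pointsOn K W = t + 1 := by
  rcases Nat.eq_zero_or_pos (pointsOn K W) with h | h
  · exact Or.inl h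
  obtain ⟨P, hP⟩ := card_pos.1 h
  obtain ⟨hPK, hPW⟩ := mem_filter.1 hP
  obtain ⟨W₀, -, h₀, hother⟩ := exists_pointsOn_pencil_of_mem hV hcard hmax hPK
  by_cases hW₀ : W = W₀
  · exact Or.inr (Or.inl (hW₀ ▸ h₀))
  · exact Or.inr (Or.inr (hother W (mem_filter.2 ⟨mem_univ W, hW, hPW⟩) hW₀))

lemma card_linesMeeting (ht : 0 < t) : #(linesMeeting K t) = Nat.card F + 1 := by
  have hcount := sum_pointsOn_eq_sum_card_filter K (linesMeeting K t)
  rw [sum_congr rfl fun W hW => (mem_filter.1 hW).2.2, sum_const, smul_eq_mul,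
    sum_congr rfl fun P hP => card_filter_linesMeeting_of_mem hV hcard hmax hP, sum_const,
    smul_eq_mul, mul_one, hcard, mul_comm] at hcount
  exact Nat.eq_of_mul_eq_mul_left ht hcount

lemma exists_linesMeeting_of_notMem (ht : 0 < t) (hdvd : t + 1 ∣ Nat.card F) {Q : ℙ F V}
    (hQ : Q ∉ K) : ∃ W ∈ linesMeeting K t, Q.submodule ≤ W := by
  by_contra! hnone
  have hdvdK : t + 1 ∣ #K := by
    have hsum := sum_pointsOn_pencil hV K Q
    rw [if_neg hQ, add_zero] at hsum
    rw [← hsum]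
    refine dvd_sum fun W hW => ?_
    obtain ⟨-, hW, hQW⟩ := mem_filter.1 hW
    rcases pointsOn_eq_zero_or_eq_or_eq hV hcard hmax hW with h | h | h
    · rw [h]
      exact dvd_zero _
    · exact absurd hQW (hnone W (mem_filter.2 ⟨mem_univ W, hW, h⟩))
    · rw [h]
  rw [hcard, mul_add_one] at hdvdK
  have := Nat.eq_zero_of_dvd_of_lt ((Nat.dvd_add_right (dvd_mul_of_dvd_right hdvd t)).1 hdvdK)
    (Nat.lt_succ_self t)
  omega

lemma exists_isArc_insert (ht : 0 < t) (hdvd : t + 1 ∣ Nat.card F) :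
    ∃ Q ∉ K, IsArc (t * (Nat.card F + 1) + 1) (t + 1) (insert Q K) := by
  have hq : 1 < Nat.card F := Finite.one_lt_card
  have hcover (P : ℙ F V) : ∃ W ∈ linesMeeting K t, P.submodule ≤ W := by
    by_cases hP : P ∈ K
    · obtain ⟨W, hW⟩ := card_pos.1 (card_filter_linesMeeting_of_mem hV hcard hmax hP).ge
      exact ⟨W, (mem_filter.1 hW).1, (mem_filter.1 hW).2⟩
    · exact exists_linesMeeting_of_notMem hV hcard hmax ht hdvd hP
  obtain ⟨Q, hTQ⟩ := exists_eq_pencil_of_covering hV (fun W hW => (mem_filter.1 hW).2.1)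
    (card_linesMeeting hV hcard hmax ht) hcover
  have hQK : Q ∉ K := fun hQ => by
    have := card_filter_linesMeeting_of_mem hV hcard hmax hQ
    rw [hTQ, filter_pencil_self, card_pencil hV] at this
    omega
  have hQt : ∀ W ∈ pencil Q, pointsOn K W = t := fun W hW => (mem_filter.1 (hTQ ▸ hW)).2.2
  obtain ⟨W₀, hW₀⟩ := card_pos.1 (by rw [card_pencil hV]; omega : 0 < #(pencil Q))
  refine ⟨Q, hQK, by rw [card_insert_of_notMem hQK, hcard], by nlinarith, fun W hW => ?_,
    W₀, (mem_filter.1 hW₀).2.1, ?_⟩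
  · rw [pointsOn_insert hQK]
    split_ifs with hQW
    · rw [hQt W (mem_filter.2 ⟨mem_univ W, hW, hQW⟩)]
    · simpa using hmax W hW
  · rw [pointsOn_insert hQK, if_pos (mem_filter.1 hW₀).2.2, hQt W₀ hW₀]

end LargeArc

lemma not_isCompleteArc (hV : finrank F V = 3) {K : Finset (ℙ F V)} {t : ℕ} (ht : 0 < t)
    (hdvd : t + 1 ∣ Nat.card F) : ¬ IsCompleteArc (t * (Nat.card F + 1)) (t + 1) K := by
  rintro ⟨⟨hcard, -, hmax, -⟩, hcomplete⟩
  obtain ⟨Q, hQK, hQ⟩ := exists_isArc_insert hV hcard hmax ht hdvd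
  exact hcomplete Q hQK hQ

lemma _root_.IsArc.card_add_le (hV : finrank F V = 3) {n r : ℕ} {K : Finset (ℙ F V)}
    (hK : IsArc n r K) : n + Nat.card F ≤ r * (Nat.card F + 1) := by
  obtain ⟨hcard, hrn, hmax, -⟩ := hK
  rw [← hcard]
  exact card_add_le_mul_of_pointsOn_le hV (card_pos.1 (by omega)) hmax

end ProjectivePlane

theorem stmt2_general {F : Type*} [Field F] [Fintype F] {q s : ℕ}
    (hq : Fintype.card F = q)
    (hdvd : (s + 2) ∣ q)
    (hge : (s + 1) * (q + 1) ≤ mPow F 3 s) :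
    mPow F 3 s = (s + 1) * (q + 1) + 1 := by
  have hV : finrank F (Fin 3 → F) = 3 := by simp
  rw [← Nat.card_eq_fintype_card] at hq
  subst hq
  have hr : 3 + s - 1 = s + 1 + 1 := by omega
  unfold mPow at hge ⊢
  set S := {n | ∃ K : Finset (ℙ F (Fin 3 → F)), IsCompleteArc n (3 + s - 1) K}
  have hbound : ∀ n ∈ S, n ≤ (s + 1) * (Nat.card F + 1) + 1 := by
    rintro n ⟨K, hK, -⟩
    have := hK.card_add_le hV
    rw [hr] at this
    nlinarith
  have hS : S.Nonempty := by
    by_contra hS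
    rw [Set.not_nonempty_iff_eq_empty.1 hS, csSup_empty] at hge
    exact (Nat.mul_pos s.succ_pos (Nat.succ_pos _)).not_ge hge
  have hmem := Nat.sSup_mem hS ⟨_, hbound⟩
  have hne : sSup S ≠ (s + 1) * (Nat.card F + 1) := fun h => by
    obtain ⟨K, hK⟩ := h ▸ hmem
    rw [hr] at hK
    exact ProjectivePlane.not_isCompleteArc hV s.succ_pos hdvd hK
  have := hbound _ hmem
  omega

/-- If `0 < s < q - 2`, `(s+2) ∣ q` and `m^s(3,q) ≥ (s+1)(q+1)`, then
`m^s(3,q) = (s+1)(q+1) + 1`. -/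
theorem stmt2 {F : Type*} [Field F] [Fintype F] {q s : ℕ}
    (hq : Fintype.card F = q) (hs0 : 0 < s) (hs : s < q - 2)
    (hdvd : (s + 2) ∣ q)
    (hge : (s + 1) * (q + 1) ≤ mPow F 3 s) :
    mPow F 3 s = (s + 1) * (q + 1) + 1 :=
  stmt2_general hq hdvd hge

end
end

section
/- Let q = 2^h be a power of 2 and s an integer with 0 < s ≤ q-2 such that s+2 = 2^e is also a power of 2 (so s+2 divides q). Then m^s(3,q) = (s+1)(q+1) + 1; that is, there exists a complete ((s+1)(q+1)+1, s+2)-arc in PG(2,q) and no larger complete (n, s+2)-arc exists. -/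
open scoped Classical

noncomputable section

namespace DennistonAux
open scoped LinearAlgebra.Projectivization
open Finset Module Projectivization
set_option linter.unusedSectionVars false
set_option maxHeartbeats 1000000

variable {F : Type*} [Field F] [Fintype F]

lemma addself (h2 : (2:F) = 0) (x : F) : x + x = 0 := by linear_combination x * h2

lemma sq_bijective (h2 : (2:F) = 0) : Function.Bijective (fun x : F => x^2) := by
  rw [Fintype.bijective_iff_injective_and_card]
  refine ⟨fun x y hxy => ?_, rfl⟩
  simp only at hxy
  have h : (x + y)^2 = 0 := by linear_combination hxy + (x*y + y^2)*h2
  have h0 : x + y = 0 := pow_eq_zero_iff (n := 2) (by norm_num) |>.mp h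
  linear_combination h0 - y*h2

lemma exists_aniso (h2 : (2:F) = 0) : ∃ a : F, ∀ y : F, y^2 + y ≠ a := by
  have hni : ¬ Function.Injective (fun y : F => y^2 + y) := by
    intro hinj
    have h01 : ((0:F)^2 + 0) = (1^2 + 1) := by linear_combination -h2
    have : (0:F) = 1 := hinj h01
    simp at this
  have hns : ¬ Function.Surjective (fun y : F => y^2 + y) := by
    intro hsurj
    exact hni (Finite.injective_iff_surjective.mpr hsurj)
  simp only [Function.Surjective, not_forall, not_exists] at hns
  obtain ⟨a, ha⟩ := hns
  exact ⟨a, fun y hy => ha y hy⟩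

lemma exists_subgroup (h2 : (2:F) = 0) (e : ℕ) (he : 2^e ≤ Fintype.card F) :
    ∃ A : Finset F, A.card = 2^e ∧ (0:F) ∈ A ∧ ∀ x ∈ A, ∀ y ∈ A, x + y ∈ A := by
  induction e with
  | zero => exact ⟨{0}, by simp⟩
  | succ n ih =>
    obtain ⟨A, hc, h0, hadd⟩ := ih (le_trans (Nat.pow_le_pow_right (by norm_num) n.le_succ) he)
    have hAne : ∃ x : F, x ∉ A := by
      by_contra hall
      push_neg at hall
      have : A = Finset.univ := Finset.eq_univ_of_forall hall
      have := hc ▸ this ▸ (Finset.card_univ (α := F))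
      have hlt : 2^n < 2^(n+1) := Nat.pow_lt_pow_right (by norm_num) n.lt_succ_self
      omega
    obtain ⟨x, hx⟩ := hAne
    refine ⟨A ∪ A.image (x + ·), ?_, Finset.mem_union_left _ h0, ?_⟩
    · have hdisj : Disjoint A (A.image (x + ·)) := by
        rw [Finset.disjoint_right]
        rintro b hb hbA
        obtain ⟨c, hc', rfl⟩ := Finset.mem_image.mp hb
        have : x = (x + c) + c := by linear_combination (-c) * h2
        exact hx (this ▸ hadd _ hbA _ hc')
      rw [Finset.card_union_of_disjoint hdisj, Finset.card_image_of_injective _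
        (add_right_injective x), hc]
      ring
    · intro u hu v hv
      rcases Finset.mem_union.mp hu with hu | hu <;> rcases Finset.mem_union.mp hv with hv | hv
      · exact Finset.mem_union_left _ (hadd _ hu _ hv)
      · obtain ⟨c, hc', rfl⟩ := Finset.mem_image.mp hv
        refine Finset.mem_union_right _ (Finset.mem_image.mpr ⟨u + c, hadd _ hu _ hc', by ring⟩)
      · obtain ⟨c, hc', rfl⟩ := Finset.mem_image.mp hu
        refine Finset.mem_union_right _ (Finset.mem_image.mpr ⟨c + v, hadd _ hc' _ hv, by ring⟩)
      · obtain ⟨c, hc', rfl⟩ := Finset.mem_image.mp hu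
        obtain ⟨d, hd', rfl⟩ := Finset.mem_image.mp hv
        have : (x + c) + (x + d) = c + d := by linear_combination x * h2
        exact this ▸ Finset.mem_union_left _ (hadd _ hc' _ hd')

lemma count_bij (A : Finset F) (f : F → F) (hf : Function.Bijective f) :
    (Finset.univ.filter (fun t => f t ∈ A)).card = A.card := by
  refine Finset.card_bij (fun t _ => f t) ?_ ?_ ?_
  · intro t ht; exact (Finset.mem_filter.mp ht).2
  · intro t _ t' _ htt'; exact hf.1 htt'
  · intro y hy
    obtain ⟨t, rfl⟩ := hf.2 y
    exact ⟨t, Finset.mem_filter.mpr ⟨Finset.mem_univ _, hy⟩, rfl⟩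
lemma fiber_card (h2 : (2:F) = 0) {aa bb : F} (haa : aa ≠ 0) (hbb : bb ≠ 0) (c y : F) :
    (univ.filter (fun t : F => c + (bb*t + aa*t^2) = y)).card = 0 ∨
    (univ.filter (fun t : F => c + (bb*t + aa*t^2) = y)).card = 2 := by
  rcases (univ.filter (fun t : F => c + (bb*t + aa*t^2) = y)).eq_empty_or_nonempty with hE | ⟨t, ht⟩
  · left; rw [hE]; rfl
  · right
    have hinv : aa * aa⁻¹ = 1 := mul_inv_cancel₀ haa
    have ht' : c + (bb*t + aa*t^2) = y := (Finset.mem_filter.mp ht).2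
    have hset : univ.filter (fun t' : F => c + (bb*t' + aa*t'^2) = y) = {t, t + bb/aa} := by
      ext t'
      simp only [Finset.mem_filter, Finset.mem_univ, true_and, Finset.mem_insert,
        Finset.mem_singleton]
      constructor
      · intro h'
        have heq : bb*t' + aa*t'^2 = bb*t + aa*t^2 := add_left_cancel (h'.trans ht'.symm)
        have hfac : (t + t') * (bb + aa*(t+t')) = 0 := by
          linear_combination heq + (bb*t + aa*t^2 + aa*t*t')*h2
        rcases mul_eq_zero.mp hfac with h'' | h''
        · left; linear_combination h'' - t*h2
        · right
          rw [div_eq_mul_inv]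
          linear_combination -(aa⁻¹)*h'' + (t+t')*hinv + t'*h2
      · rintro (rfl | rfl)
        · exact ht'
        · rw [← ht']
          rw [div_eq_mul_inv]
          linear_combination (bb^2*aa⁻¹)*hinv + (t*bb*aa*aa⁻¹ + bb^2*aa⁻¹)*h2
    rw [hset, Finset.card_insert_of_notMem, Finset.card_singleton]
    simp only [Finset.mem_singleton]
    intro hcontra
    have : bb/aa = 0 := by linear_combination -hcontra
    exact hbb (by field_simp at this; simpa using this)

lemma count_coset (h2 : (2:F) = 0) {aa bb : F} (haa : aa ≠ 0) (hbb : bb ≠ 0) (c : F)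
    (B : Finset F) :
    (univ.filter (fun t : F => c + (bb*t + aa*t^2) ∈ B)).card
      = 2 * (B.filter (fun y => ∃ t : F, c + (bb*t + aa*t^2) = y)).card := by
  set g := fun t : F => c + (bb*t + aa*t^2) with hg
  set T := B.filter (fun y => ∃ t : F, g t = y) with hTdef
  have h1 : (univ.filter fun t => g t ∈ B).card
      = ∑ y ∈ T, ((univ.filter fun t => g t ∈ B).filter fun t => g t = y).card :=
    Finset.card_eq_sum_card_fiberwise
      (fun t ht => Finset.mem_filter.mpr ⟨(Finset.mem_filter.mp ht).2, t, rfl⟩)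
  have h2' : ∀ y ∈ T, ((univ.filter fun t => g t ∈ B).filter fun t => g t = y).card = 2 := by
    intro y hy
    have hfe : ((univ.filter fun t => g t ∈ B).filter fun t => g t = y)
        = univ.filter (fun t => g t = y) := by
      ext t
      simp only [Finset.mem_filter, Finset.mem_univ, true_and]
      exact ⟨fun h => h.2, fun h => ⟨h ▸ (Finset.mem_filter.mp hy).1, h⟩⟩
    rw [hfe]
    rcases fiber_card h2 haa hbb c y with h | h
    · obtain ⟨t, ht⟩ := (Finset.mem_filter.mp hy).2
      exfalso
      rw [Finset.card_eq_zero] at h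
      have : t ∈ (univ.filter fun t : F => c + (bb*t + aa*t^2) = y) :=
        Finset.mem_filter.mpr ⟨Finset.mem_univ t, ht⟩
      rw [h] at this
      exact absurd this (Finset.notMem_empty t)
    · exact h
  rw [h1, Finset.sum_congr rfl h2', Finset.sum_const, smul_eq_mul, mul_comm]

lemma index_two (h2 : (2:F) = 0) (H : Finset F) (hcard : 2 * H.card = Fintype.card F)
    (hadd : ∀ x ∈ H, ∀ y ∈ H, x + y ∈ H) {y z : F} (hy : y ∉ H) (hz : z ∉ H) :
    y + z ∈ H := by
  have hdisj : Disjoint H (H.image (y + ·)) := by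
    rw [Finset.disjoint_right]
    rintro b hb hbH
    obtain ⟨c, hc', rfl⟩ := Finset.mem_image.mp hb
    have : y = (y + c) + c := by linear_combination (-c)*h2
    exact hy (this ▸ hadd _ hbH _ hc')
  have huniv : H ∪ H.image (y + ·) = Finset.univ := by
    apply Finset.eq_univ_of_card
    rw [Finset.card_union_of_disjoint hdisj,
      Finset.card_image_of_injective _ (add_right_injective y)]
    omega
  have hzmem : z ∈ H ∪ H.image (y + ·) := huniv ▸ Finset.mem_univ z
  rcases Finset.mem_union.mp hzmem with h | h
  · exact absurd h hz
  · obtain ⟨c, hc', hc''⟩ := Finset.mem_image.mp h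
    have : y + z = c := by linear_combination hc'' + (z-c)*h2
    exact this ▸ hc'

lemma count_main (h2 : (2:F) = 0) (A : Finset F) (h0A : (0:F) ∈ A)
    (haddA : ∀ x ∈ A, ∀ y ∈ A, x + y ∈ A)
    {qq bb aa : F} (haa : aa ≠ 0) (hbb : bb ≠ 0)
    (hnz : ∀ t : F, qq + (bb*t + aa*t^2) ≠ 0) :
    (univ.filter (fun t : F => qq + (bb*t + aa*t^2) ∈ A)).card = 0 ∨
    (univ.filter (fun t : F => qq + (bb*t + aa*t^2) ∈ A)).card = A.card := by
  set φ := fun t : F => bb*t + aa*t^2 with hφ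
  have hφadd : ∀ t t' : F, φ (t + t') = φ t + φ t' := by
    intro t t'; simp only [hφ]; linear_combination aa*t*t'*h2
  have hnzφ : ∀ t : F, qq + φ t ≠ 0 := fun t => hnz t
  set T := A.filter (fun y => ∃ t : F, qq + φ t = y) with hTdef
  set HA := A.filter (fun y => ∃ t : F, φ t = y) with hHAdef
  have hcount : (univ.filter (fun t : F => qq + φ t ∈ A)).card = 2 * T.card :=
    count_coset h2 haa hbb qq A
  rcases T.eq_empty_or_nonempty with hTe | ⟨x₀, hx₀⟩
  · left; rw [hcount, hTe]; simp
  · right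
    obtain ⟨hx₀A, t₁, ht₁⟩ := Finset.mem_filter.mp hx₀
    -- H as a finset, and its cardinality
    set H := univ.filter (fun y : F => ∃ t : F, φ t = y) with hHdef
    have hHcard : 2 * H.card = Fintype.card F := by
      have := count_coset h2 haa hbb (0:F) (univ : Finset F)
      simp only [Finset.mem_univ, Finset.filter_true, Finset.card_univ] at this
      rw [this]
      congr 1
      apply Finset.card_nbij' id id <;>
        simp only [Finset.mem_filter, Finset.mem_univ, true_and, hHdef, hφ, zero_add, id] <;>
        tauto
    have hHadd : ∀ x ∈ H, ∀ y ∈ H, x + y ∈ H := by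
      rintro x hx y hy
      obtain ⟨-, u, hu⟩ := Finset.mem_filter.mp hx
      obtain ⟨-, v, hv⟩ := Finset.mem_filter.mp hy
      exact Finset.mem_filter.mpr ⟨Finset.mem_univ _, u + v, by rw [hφadd, hu, hv]⟩
    -- A is not contained in H
    have hex : ∃ α ∈ A, ¬ ∃ t : F, φ t = α := by
      by_contra hall
      push_neg at hall
      obtain ⟨u, hu⟩ := hall x₀ hx₀A
      apply hnzφ (u + t₁)
      rw [hφadd, hu]
      linear_combination ht₁ + x₀*h2
    obtain ⟨α, hαA, hαH⟩ := hex
    have hαH' : α ∉ H := fun hc => hαH (Finset.mem_filter.mp hc).2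
    -- T.card = HA.card
    have hTH : T.card = HA.card := by
      refine Finset.card_bij (fun y _ => y + x₀) ?_ ?_ ?_
      · intro y hy
        obtain ⟨hyA, t, ht⟩ := Finset.mem_filter.mp hy
        refine Finset.mem_filter.mpr ⟨haddA _ hyA _ hx₀A, t + t₁, ?_⟩
        rw [hφadd]
        linear_combination ht + ht₁ - qq*h2
      · intro y₁ h₁ y₂ h₂ hee; exact add_right_cancel hee
      · intro z hz
        obtain ⟨hzA, u, hu⟩ := Finset.mem_filter.mp hz
        refine ⟨z + x₀, Finset.mem_filter.mpr ⟨haddA _ hzA _ hx₀A, u + t₁, ?_⟩, by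
          linear_combination x₀*h2⟩
        rw [hφadd]
        linear_combination hu + ht₁
    -- A.card = 2 * HA.card
    have hsplit := Finset.card_filter_add_card_filter_not
      (s := A) (p := fun y => ∃ t : F, φ t = y)
    have hAH : (A.filter (fun y => ¬ ∃ t : F, φ t = y)).card = HA.card := by
      refine Finset.card_bij (fun y _ => y + α) ?_ ?_ ?_
      · intro y hy
        obtain ⟨hyA, hyH⟩ := Finset.mem_filter.mp hy
        have hyH' : y ∉ H := fun hc => hyH (Finset.mem_filter.mp hc).2
        have := index_two h2 H hHcard hHadd hyH' hαH'
        exact Finset.mem_filter.mpr ⟨haddA _ hyA _ hαA, (Finset.mem_filter.mp this).2⟩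
      · intro y₁ h₁ y₂ h₂ hee; exact add_right_cancel hee
      · intro z hz
        obtain ⟨hzA, v, hv⟩ := Finset.mem_filter.mp hz
        refine ⟨z + α, Finset.mem_filter.mpr ⟨haddA _ hzA _ hαA, ?_⟩, by
          linear_combination α*h2⟩
        rintro ⟨u, hu⟩
        apply hαH
        refine ⟨u + v, ?_⟩
        rw [hφadd, hu, hv]
        linear_combination z*h2
    rw [← hHAdef] at hsplit
    rw [hAH] at hsplit
    rw [hcount, hTH]
    omega
lemma vne2 (x y : F) : (![x, y, 1] : Fin 3 → F) ≠ 0 := by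
  intro hc
  have := congrFun hc 2
  simp at this

lemma toP_inj : Function.Injective
    (fun w : F × F => Projectivization.mk F ![w.1, w.2, 1] (vne2 w.1 w.2)) := by
  rintro ⟨x, y⟩ ⟨x', y'⟩ hxy
  simp only at hxy
  rw [mk_eq_mk_iff'] at hxy
  obtain ⟨c, hc⟩ := hxy
  have h2 := congrFun hc 2
  have h0 := congrFun hc 0
  have h1 := congrFun hc 1
  simp [Pi.smul_apply, smul_eq_mul] at h2 h0 h1
  subst h2
  simp at h0 h1
  simp [h0, h1]

/-- The projective line over `F` has `q + 1` points. -/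
lemma card_proj_line : Nat.card (ℙ F (Fin 2 → F)) = Fintype.card F + 1 := by
  have hne1 : ∀ x : F, (![x, 1] : Fin 2 → F) ≠ 0 := by
    intro x hc; have := congrFun hc 1; simp at this
  have hne0 : (![1, 0] : Fin 2 → F) ≠ 0 := by
    intro hc; have := congrFun hc 0; simp at this
  have hbij : Function.Bijective (fun o : Option F =>
      Option.elim o (Projectivization.mk F ![1,0] hne0) (fun x => Projectivization.mk F ![x,1] (hne1 x))) := by
    constructor
    · rintro (_|x) (_|y) heq <;> simp only [Option.elim] at heq
      · rfl
      · exfalso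
        rw [mk_eq_mk_iff'] at heq
        obtain ⟨c, hc⟩ := heq
        have h1 := congrFun hc 1
        have h0 := congrFun hc 0
        simp at h1 h0
        rw [h1] at h0
        simp at h0
      · exfalso
        rw [mk_eq_mk_iff'] at heq
        obtain ⟨c, hc⟩ := heq
        have h1 := congrFun hc 1
        have h0 := congrFun hc 0
        simp at h1 h0
      · rw [mk_eq_mk_iff'] at heq
        obtain ⟨c, hc⟩ := heq
        have h1 := congrFun hc 1
        have h0 := congrFun hc 0
        simp at h1 h0
        subst h1; simp at h0; simp [h0]
    · intro P
      induction P using Projectivization.ind with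
      | h v hv =>
        by_cases hv1 : v 1 = 0
        · have hv0 : v 0 ≠ 0 := by
            intro hv0
            apply hv
            funext i
            fin_cases i <;> simp [hv0, hv1]
          refine ⟨none, ?_⟩
          simp only [Option.elim]
          rw [mk_eq_mk_iff']
          refine ⟨(v 0)⁻¹, funext fun i => ?_⟩
          fin_cases i <;> simp [hv1, inv_mul_cancel₀ hv0]
        · refine ⟨some (v 0 / v 1), ?_⟩
          simp only [Option.elim]
          rw [mk_eq_mk_iff']
          refine ⟨(v 1)⁻¹, funext fun i => ?_⟩
          fin_cases i <;> simp [inv_mul_cancel₀ hv1]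
          rw [div_eq_mul_inv]; ring
  rw [← Nat.card_eq_of_bijective _ hbij, Nat.card_eq_fintype_card, Fintype.card_option]

lemma card_proj_two {V : Type*} [AddCommGroup V] [Module F V]
    (hV : finrank F V = 2) : Nat.card (ℙ F V) = Fintype.card F + 1 := by
  have hfd : FiniteDimensional F V := FiniteDimensional.of_finrank_pos (by omega)
  have hV' : finrank F V = finrank F (Fin 2 → F) := by
    rw [hV, Module.finrank_pi]; simp
  obtain ⟨eqv⟩ := FiniteDimensional.nonempty_linearEquiv_of_finrank_eq hV'
  rw [← card_proj_line (F := F)]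
  refine (Nat.card_eq_of_bijective (Projectivization.map eqv.toLinearMap eqv.injective) ⟨?_, ?_⟩)
  · exact Projectivization.map_injective (τ := RingHom.id F) eqv.toLinearMap eqv.injective
  · intro P
    induction P using Projectivization.ind with
    | h w hw =>
      have hsw : eqv.symm w ≠ 0 := by
        intro hc
        apply hw
        rw [← eqv.apply_symm_apply w, hc, map_zero]
      refine ⟨Projectivization.mk F (eqv.symm w) hsw, ?_⟩
      rw [Projectivization.map_mk]
      rw [mk_eq_mk_iff']
      exact ⟨1, by simp⟩

lemma finrank_fin3 : finrank F (Fin 3 → F) = 3 := by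
  rw [Module.finrank_pi]; simp

lemma hyp_functional (W : Submodule F (Fin 3 → F)) (hW : finrank F ↥W = 2) :
    ∃ α β γ : F, ¬(α = 0 ∧ β = 0 ∧ γ = 0) ∧
      ∀ v : Fin 3 → F, (v ∈ W ↔ α * v 0 + β * v 1 + γ * v 2 = 0) := by
  have hq : finrank F ((Fin 3 → F) ⧸ W) = 1 := by
    have h3 := Submodule.finrank_quotient_add_finrank W
    rw [finrank_fin3, hW] at h3; omega
  obtain ⟨eqv⟩ := FiniteDimensional.nonempty_linearEquiv_of_finrank_eq
    (hq.trans (Module.finrank_self F).symm)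
  set f : (Fin 3 → F) →ₗ[F] F := eqv.toLinearMap ∘ₗ W.mkQ with hf
  have hkerW : LinearMap.ker f = W := by
    rw [hf, LinearMap.ker_comp, LinearEquiv.ker, Submodule.comap_bot, Submodule.ker_mkQ]
  have hmem : ∀ v, v ∈ W ↔ f v = 0 := by
    intro v; rw [← hkerW]; exact Iff.rfl
  have hdecomp : ∀ v : Fin 3 → F,
      v = v 0 • ![1,0,0] + v 1 • ![0,1,0] + v 2 • ![0,0,1] := by
    intro v; funext i; fin_cases i <;> simp
  have hform : ∀ v : Fin 3 → F,
      f v = f ![1,0,0] * v 0 + f ![0,1,0] * v 1 + f ![0,0,1] * v 2 := by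
    intro v
    conv_lhs => rw [hdecomp v]
    simp only [map_add, map_smul, smul_eq_mul]
    ring
  refine ⟨f ![1,0,0], f ![0,1,0], f ![0,0,1], ?_, fun v => by rw [hmem, hform]⟩
  rintro ⟨ha, hb, hc⟩
  have hWtop : W = ⊤ := by
    rw [eq_top_iff]
    intro v _
    rw [hmem, hform, ha, hb, hc]
    ring
  rw [hWtop] at hW
  have := finrank_top F (Fin 3 → F)
  rw [finrank_fin3] at this
  omega

lemma functional_hyp (α β γ : F) (hne : ¬(α = 0 ∧ β = 0 ∧ γ = 0)) :
    ∃ W : Submodule F (Fin 3 → F), finrank F ↥W = 2 ∧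
      ∀ v : Fin 3 → F, (v ∈ W ↔ α * v 0 + β * v 1 + γ * v 2 = 0) := by
  set f : (Fin 3 → F) →ₗ[F] F := α • (LinearMap.proj 0) + β • (LinearMap.proj 1)
    + γ • (LinearMap.proj 2) with hf
  have happ : ∀ v : Fin 3 → F, f v = α * v 0 + β * v 1 + γ * v 2 := by
    intro v; simp [hf, smul_eq_mul]
  refine ⟨LinearMap.ker f, ?_, fun v => by rw [LinearMap.mem_ker, happ]⟩
  have hrn := LinearMap.finrank_range_add_finrank_ker f
  have hex : ∃ v, f v ≠ 0 := by
    by_contra hc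
    push_neg at hc
    apply hne
    have h1 := hc ![1,0,0]
    have h2 := hc ![0,1,0]
    have h3 := hc ![0,0,1]
    rw [happ] at h1 h2 h3
    simp at h1 h2 h3
    exact ⟨h1, h2, h3⟩
  have hrange : LinearMap.range f = ⊤ := by
    obtain ⟨v, hv⟩ := hex
    rw [eq_top_iff]
    intro c _
    refine ⟨(c / f v) • v, ?_⟩
    rw [map_smul, smul_eq_mul]
    field_simp
  rw [hrange, finrank_top, Module.finrank_self, finrank_fin3] at hrn
  omega

lemma sup_of_two {V : Type*} [AddCommGroup V] [Module F V] [FiniteDimensional F V]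
    {S T : Submodule F V} (hS : finrank F ↥S = 1) (hT : finrank F ↥T = 1) (hST : S ≠ T) :
    finrank F ↥(S ⊔ T) = 2 := by
  have hbot : S ⊓ T = ⊥ := by
    by_contra hb
    have h1 : finrank F ↥(S ⊓ T) ≠ 0 := fun hz => hb (Submodule.finrank_eq_zero.mp hz)
    have hinfS : S ⊓ T = S := by
      apply Submodule.eq_of_le_of_finrank_le inf_le_left
      omega
    have : S ≤ T := by rw [← hinfS]; exact inf_le_right
    exact hST (Submodule.eq_of_le_of_finrank_le this (by omega))
  have := Submodule.finrank_sup_add_finrank_inf_eq S T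
  rw [hbot, finrank_bot, hS, hT] at this
  omega
/-- the anisotropic binary quadratic form -/
def QF (a : F) (w : F × F) : F := w.1^2 + w.1*w.2 + a*w.2^2

lemma QF_smul (a c : F) (w : F × F) : QF a (c • w) = c^2 * QF a w := by
  simp only [QF, Prod.smul_fst, Prod.smul_snd, smul_eq_mul]
  ring

lemma QF_zero (a : F) : QF a 0 = 0 := by simp [QF]

lemma QF_aniso (h2 : (2:F) = 0) {a : F} (ha : ∀ y : F, y^2 + y ≠ a) {w : F × F}
    (hw : QF a w = 0) : w = 0 := by
  rcases eq_or_ne w.2 0 with h | h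
  · have h1 : w.1^2 = 0 := by rw [QF, h] at hw; linear_combination hw
    have : w.1 = 0 := by
      have := pow_eq_zero_iff (n := 2) (by norm_num) |>.mp h1
      exact this
    exact Prod.ext this h
  · exfalso
    apply ha (w.1 / w.2)
    rw [QF] at hw
    have hinv : w.2 * w.2⁻¹ = 1 := mul_inv_cancel₀ h
    rw [div_eq_mul_inv]
    linear_combination (w.2⁻¹^2)*hw + (-(w.1*w.2⁻¹) - a*(w.2*w.2⁻¹+1))*hinv - a*h2

lemma line_param (h2 : (2:F) = 0) (a : F) (A : Finset F) (α β γ : F)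
    (hne : ¬(α = 0 ∧ β = 0)) :
    ∃ p : F × F, (α*p.1 + β*p.2 = γ) ∧ (γ = 0 → p = 0) ∧
    ((univ.filter (fun w : F × F => QF a w ∈ A ∧ α*w.1 + β*w.2 + γ = 0)).card
      = (univ.filter (fun t : F => QF a p + (γ*t + (QF a (β, α))*t^2) ∈ A)).card) ∧
    (∀ t : F, QF a (p.1 + t*β, p.2 + t*α) = QF a p + (γ*t + (QF a (β, α))*t^2)) := by
  set p : F × F := if β = 0 then (γ/α, 0) else (0, γ/β) with hp
  have hα : β = 0 → α ≠ 0 := fun hb hc => hne ⟨hc, hb⟩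
  have hpeq : α*p.1 + β*p.2 = γ := by
    rw [hp]
    split_ifs with hb
    · simp only
      rw [hb, mul_zero, add_zero]
      field_simp [hα hb]
    · simp only
      rw [mul_zero, zero_add]
      field_simp
  have hp0 : γ = 0 → p = 0 := by
    intro hγ
    rw [hp, hγ]
    split_ifs <;> simp [Prod.ext_iff]
  refine ⟨p, hpeq, hp0, ?_⟩
  have hid : ∀ t : F, QF a (p.1 + t*β, p.2 + t*α)
      = QF a p + (γ*t + (QF a (β, α))*t^2) := by
    intro t
    simp only [QF]
    linear_combination t*hpeq + (p.1*t*β + a*p.2*t*α)*h2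
  refine ⟨?_, hid⟩
  set i : F → F × F := fun t => (p.1 + t*β, p.2 + t*α) with hi
  set j : F × F → F := fun w => if β = 0 then w.2/α else w.1/β with hj
  have hji : ∀ t : F, j (i t) = t := by
    intro t
    show (if β = 0 then (p.2 + t*α)/α else (p.1 + t*β)/β) = t
    split_ifs with hb
    · rw [show p = (γ/α,0) from by rw [hp, if_pos hb]]
      simp only
      field_simp [hα hb]
      ring
    · rw [show p = (0,γ/β) from by rw [hp, if_neg hb]]
      simp only
      field_simp
      ring
  have hij : ∀ w : F × F, (α*w.1 + β*w.2 + γ = 0) → i (j w) = w := by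
    intro w hw
    show (p.1 + (if β = 0 then w.2/α else w.1/β)*β, p.2 + (if β = 0 then w.2/α else w.1/β)*α) = w
    rcases eq_or_ne β 0 with hb | hb
    · have hαne := hα hb
      have hw1 : w.1 = γ/α := by
        rw [hb] at hw
        field_simp
        linear_combination hw - γ*h2
      rw [if_pos hb, show p = (γ/α,0) from by rw [hp, if_pos hb]]
      refine Prod.ext ?_ ?_
      · simp only
        rw [hb, hw1]
        ring
      · simp only
        field_simp
        ring
    · rw [if_neg hb, show p = (0,γ/β) from by rw [hp, if_neg hb]]
      refine Prod.ext ?_ ?_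
      · simp only
        field_simp
        ring
      · simp only
        field_simp
        linear_combination -hw + (α*w.1 + γ)*h2
  have hion : ∀ t : F, α*(i t).1 + β*(i t).2 + γ = 0 := by
    intro t
    rw [hi]
    simp only
    linear_combination hpeq + (t*α*β + γ)*h2
  refine Finset.card_nbij' j i ?_ ?_ ?_ ?_
  · intro w hw
    obtain ⟨-, hwA, hwl⟩ := Finset.mem_filter.mp hw
    refine Finset.mem_filter.mpr ⟨Finset.mem_univ _, ?_⟩
    have hgoal : QF a (i (j w)) = QF a p + (γ*(j w) + (QF a (β, α))*(j w)^2) := hid (j w)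
    rw [← hgoal, hij w hwl]
    exact hwA
  · intro t ht
    obtain ⟨-, htA⟩ := Finset.mem_filter.mp ht
    refine Finset.mem_filter.mpr ⟨Finset.mem_univ _, ⟨?_, hion t⟩⟩
    rw [show QF a (i t) = QF a p + (γ*t + (QF a (β, α))*t^2) from hid t]
    exact htA
  · intro w hw
    obtain ⟨-, -, hwl⟩ := Finset.mem_filter.mp hw
    exact hij w hwl
  · intro t _
    exact hji t

def toP (w : F × F) : ℙ F (Fin 3 → F) := Projectivization.mk F ![w.1, w.2, 1] (vne2 w.1 w.2)

lemma toP_injective : Function.Injective (toP (F := F)) := toP_inj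

/-- The Denniston arc. -/
def KD (a : F) (A : Finset F) : Finset (ℙ F (Fin 3 → F)) :=
  (univ.filter (fun w : F × F => QF a w ∈ A)).image toP

lemma KD_filter (a : F) (A : Finset F) (W : Submodule F (Fin 3 → F))
    (α β γ : F) (hWm : ∀ v : Fin 3 → F, (v ∈ W ↔ α * v 0 + β * v 1 + γ * v 2 = 0)) :
    ((KD a A).filter (fun P => P.submodule ≤ W)).card
      = (univ.filter (fun w : F × F => QF a w ∈ A ∧ α*w.1 + β*w.2 + γ = 0)).card := by
  rw [KD, Finset.filter_image, Finset.card_image_of_injective _ toP_injective,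
    Finset.filter_filter]
  congr 1
  apply Finset.filter_congr
  intro w _
  have hsub : (toP w).submodule ≤ W ↔ α*w.1 + β*w.2 + γ = 0 := by
    rw [toP, submodule_mk, Submodule.span_singleton_le_iff_mem, hWm]
    simp
  rw [hsub]

lemma origin_mem_iff (a : F) (A : Finset F) (W : Submodule F (Fin 3 → F))
    (α β γ : F) (hWm : ∀ v : Fin 3 → F, (v ∈ W ↔ α * v 0 + β * v 1 + γ * v 2 = 0)) :
    ((toP (0,0) : ℙ F (Fin 3 → F)).submodule ≤ W ↔ γ = 0) := by
  rw [toP, submodule_mk, Submodule.span_singleton_le_iff_mem, hWm]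
  simp

lemma KD_count (h2 : (2:F) = 0) {a : F} (ha : ∀ y : F, y^2 + y ≠ a)
    (A : Finset F) (h0A : (0:F) ∈ A) (haddA : ∀ x ∈ A, ∀ y ∈ A, x + y ∈ A)
    (W : Submodule F (Fin 3 → F)) (hW2 : finrank F ↥W = 2) :
    (((KD a A).filter (fun P => P.submodule ≤ W)).card = 0 ∨
      ((KD a A).filter (fun P => P.submodule ≤ W)).card = A.card) ∧
    ((toP (0,0) : ℙ F (Fin 3 → F)).submodule ≤ W →
      ((KD a A).filter (fun P => P.submodule ≤ W)).card = A.card) := by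
  obtain ⟨α, β, γ, hne, hWm⟩ := hyp_functional W hW2
  rw [KD_filter a A W α β γ hWm, origin_mem_iff a A W α β γ hWm]
  by_cases hab : α = 0 ∧ β = 0
  · have hγ : γ ≠ 0 := fun hc => hne ⟨hab.1, hab.2, hc⟩
    have hempty : (univ.filter (fun w : F × F => QF a w ∈ A ∧ α*w.1 + β*w.2 + γ = 0)) = ∅ := by
      rw [Finset.filter_eq_empty_iff]
      rintro w -
      rintro ⟨-, hl⟩
      rw [hab.1, hab.2] at hl
      apply hγ
      linear_combination hl
    rw [hempty]
    exact ⟨Or.inl rfl, fun hc => absurd hc hγ⟩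
  · obtain ⟨p, hpeq, hp0, hcount, hid⟩ := line_param h2 a A α β γ hab
    rw [hcount]
    have haa : QF a (β, α) ≠ 0 := by
      intro h0
      have := QF_aniso h2 ha h0
      rw [Prod.ext_iff] at this
      exact hab ⟨this.2, this.1⟩
    rcases eq_or_ne γ 0 with hγ | hγ
    · have hpz := hp0 hγ
      have hcong : (univ.filter (fun t : F => QF a p + (γ*t + (QF a (β, α))*t^2) ∈ A))
          = univ.filter (fun t : F => QF a (β, α) * t^2 ∈ A) := by
        apply Finset.filter_congr
        intro t _
        rw [hpz, hγ, QF_zero]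
        ring_nf
      have hcardA : (univ.filter (fun t : F => QF a (β, α) * t^2 ∈ A)).card = A.card := by
        apply count_bij
        have : (fun t : F => QF a (β, α) * t^2) = (fun x => QF a (β, α) * x) ∘ (fun t : F => t^2) := rfl
        rw [this]
        exact (Equiv.mulLeft₀ _ haa).bijective.comp (sq_bijective h2)
      rw [hcong, hcardA]
      exact ⟨Or.inr rfl, fun _ => rfl⟩
    · have hnz : ∀ t : F, QF a p + (γ*t + (QF a (β, α))*t^2) ≠ 0 := by
        intro t hval
        have hq0 : QF a (p.1 + t*β, p.2 + t*α) = 0 := by rw [hid t]; exact hval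
        have hz := QF_aniso h2 ha hq0
        rw [Prod.ext_iff] at hz
        obtain ⟨e1, e2⟩ := hz
        simp only [Prod.fst_zero, Prod.snd_zero] at e1 e2
        apply hγ
        linear_combination -hpeq + α*e1 + β*e2 - t*α*β*h2
      exact ⟨count_main h2 A h0A haddA haa hγ hnz, fun hc => absurd hc hγ⟩

lemma KD_card (h2 : (2:F) = 0) {a : F} (ha : ∀ y : F, y^2 + y ≠ a)
    (A : Finset F) (h0A : (0:F) ∈ A) :
    (KD a A).card = (Fintype.card F + 1) * (A.card - 1) + 1 := by
  haveI hfinP : Finite (ℙ F (F × F)) :=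
    (Quotient.finite _ : Finite (Quotient (projectivizationSetoid F (F × F))))
  haveI := Fintype.ofFinite (ℙ F (F × F))
  have hcP : Fintype.card (ℙ F (F × F)) = Fintype.card F + 1 := by
    rw [← Nat.card_eq_fintype_card]
    apply card_proj_two
    rw [Module.finrank_prod, Module.finrank_self]
  set KS := univ.filter (fun w : F × F => QF a w ∈ A) with hKS
  have h0KS : (0 : F × F) ∈ KS := by
    rw [hKS, Finset.mem_filter]
    exact ⟨Finset.mem_univ _, by rw [QF_zero]; exact h0A⟩
  set ρ : F × F → ℙ F (F × F) :=
    fun w => if h : w = 0 then Classical.arbitrary _ else Projectivization.mk F w h with hρ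
  have hfib : ∀ D : ℙ F (F × F),
      ((KS.erase 0).filter (fun w => ρ w = D)).card = A.card - 1 := by
    intro D
    have hd := D.rep_nonzero
    have haa : QF a D.rep ≠ 0 := fun h0 => hd (QF_aniso h2 ha h0)
    have hfull : (univ.filter (fun c : F => QF a D.rep * c^2 ∈ A)).card = A.card := by
      apply count_bij
      have : (fun c : F => QF a D.rep * c^2) = (fun x => QF a D.rep * x) ∘ (fun c : F => c^2) :=
        rfl
      rw [this]
      exact (Equiv.mulLeft₀ _ haa).bijective.comp (sq_bijective h2)
    have h0mem : (0:F) ∈ univ.filter (fun c : F => QF a D.rep * c^2 ∈ A) := by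
      simp only [Finset.mem_filter, Finset.mem_univ, true_and]
      rw [show (0:F)^2 = 0 by ring, mul_zero]
      exact h0A
    have hbij : ((univ.filter (fun c : F => QF a D.rep * c^2 ∈ A)).erase 0).card
        = ((KS.erase 0).filter (fun w => ρ w = D)).card := by
      refine Finset.card_bij (fun c _ => c • D.rep) ?_ ?_ ?_
      · intro c hc
        obtain ⟨hc0, hcA⟩ := Finset.mem_erase.mp hc
        simp only [Finset.mem_filter, Finset.mem_univ, true_and] at hcA
        have hne : c • D.rep ≠ 0 := smul_ne_zero hc0 hd
        refine Finset.mem_filter.mpr ⟨Finset.mem_erase.mpr ⟨hne, ?_⟩, ?_⟩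
        · rw [hKS, Finset.mem_filter]
          refine ⟨Finset.mem_univ _, ?_⟩
          rw [QF_smul, mul_comm]
          exact hcA
        · rw [hρ]
          simp only [dif_neg hne]
          rw [show Projectivization.mk F (c • D.rep) hne = Projectivization.mk F D.rep hd from
            (mk_eq_mk_iff' F _ _ hne hd).mpr ⟨c, rfl⟩]
          exact D.mk_rep
      · intro c₁ h₁ c₂ h₂ hee
        have : (c₁ - c₂) • D.rep = 0 := by rw [sub_smul, hee, sub_self]
        rcases smul_eq_zero.mp this with h | h
        · exact sub_eq_zero.mp h
        · exact absurd h hd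
      · intro w hw
        obtain ⟨hw0', hwρ⟩ := Finset.mem_filter.mp hw
        obtain ⟨hwne, hwKS⟩ := Finset.mem_erase.mp hw0'
        rw [hρ] at hwρ
        simp only [dif_neg hwne] at hwρ
        have : Projectivization.mk F w hwne = Projectivization.mk F D.rep hd := by
          rw [hwρ, D.mk_rep]
        obtain ⟨c, hc⟩ := (mk_eq_mk_iff' F _ _ hwne hd).mp this
        have hc0 : c ≠ 0 := by
          intro hcz
          rw [hcz, zero_smul] at hc
          exact hwne hc.symm
        refine ⟨c, Finset.mem_erase.mpr ⟨hc0, ?_⟩, hc⟩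
        simp only [Finset.mem_filter, Finset.mem_univ, true_and]
        rw [hKS, Finset.mem_filter] at hwKS
        have := hwKS.2
        rw [← hc, QF_smul, mul_comm] at this
        exact this
    rw [← hbij, Finset.card_erase_of_mem h0mem, hfull]
  have hKS0 : (KS.erase 0).card = (Fintype.card F + 1) * (A.card - 1) := by
    rw [Finset.card_eq_sum_card_fiberwise (f := ρ) (t := univ) (fun x _ => Finset.mem_univ _),
      Finset.sum_congr rfl (fun D _ => hfib D), Finset.sum_const, smul_eq_mul,
      Finset.card_univ, hcP]
  have hKScard : KS.card = (Fintype.card F + 1) * (A.card - 1) + 1 := by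
    have h1 := Finset.card_erase_of_mem h0KS
    have h2' : 1 ≤ KS.card := Finset.card_pos.mpr ⟨0, h0KS⟩
    omega
  rw [KD, Finset.card_image_of_injective _ toP_injective]
  exact hKScard

lemma hyp_iff (W : Submodule F (Fin 3 → F)) : IsHyp F W ↔ finrank F ↥W = 2 := by
  unfold IsHyp
  rw [finrank_fin3]

lemma arc_le {n r : ℕ} (K : Finset (Projectivization F (Fin 3 → F))) (hcard : K.card = n)
    (hbound : ∀ W : Submodule F (Fin 3 → F), IsHyp F W → pointsOn K W ≤ r) :
    n ≤ (Fintype.card F + 1) * (r - 1) + 1 := by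
  rcases K.eq_empty_or_nonempty with rfl | ⟨P₀, hP₀⟩
  · simp at hcard
    omega
  · have hn1 : 1 ≤ n := hcard ▸ Finset.card_pos.mpr ⟨P₀, hP₀⟩
    set Z := P₀.submodule with hZ
    haveI : Finite ((Fin 3 → F) ⧸ Z) :=
      (Quotient.finite _ : Finite (Quotient (Submodule.quotientRel Z)))
    have hq2 : finrank F ((Fin 3 → F) ⧸ Z) = 2 := by
      have h3 := Submodule.finrank_quotient_add_finrank Z
      rw [finrank_fin3, P₀.finrank_submodule] at h3
      omega
    haveI : Nontrivial ((Fin 3 → F) ⧸ Z) :=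
      Module.nontrivial_of_finrank_pos (R := F) (by omega)
    haveI : Finite (ℙ F ((Fin 3 → F) ⧸ Z)) :=
      (Quotient.finite _ : Finite (Quotient (projectivizationSetoid F ((Fin 3 → F) ⧸ Z))))
    haveI : Fintype (ℙ F ((Fin 3 → F) ⧸ Z)) := Fintype.ofFinite _
    have hcP : Fintype.card (ℙ F ((Fin 3 → F) ⧸ Z)) = Fintype.card F + 1 := by
      rw [← Nat.card_eq_fintype_card]
      exact card_proj_two hq2
    set f : ℙ F (Fin 3 → F) → ℙ F ((Fin 3 → F) ⧸ Z) := fun P =>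
      if h : Z.mkQ P.rep = 0 then Classical.arbitrary _ else Projectivization.mk F _ h with hf
    have hfib : ∀ D : ℙ F ((Fin 3 → F) ⧸ Z),
        ((K.erase P₀).filter (fun P => f P = D)).card ≤ r - 1 := by
      intro D
      obtain ⟨w, hw⟩ := Z.mkQ_surjective D.rep
      have hw0 : w ∉ Z := by
        intro hc
        apply D.rep_nonzero
        rw [← hw, Submodule.mkQ_apply, Submodule.Quotient.mk_eq_zero]
        exact hc
      have hwne : w ≠ 0 := fun hc => hw0 (hc ▸ Z.zero_mem)
      have hZW : Z ≠ Submodule.span F {w} := by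
        intro hc
        apply hw0
        rw [hc]
        exact Submodule.mem_span_singleton_self w
      set W := Z ⊔ Submodule.span F {w} with hWdef
      have hWrank : finrank F ↥W = 2 :=
        sup_of_two P₀.finrank_submodule (finrank_span_singleton hwne) hZW
      have hsub : ∀ P ∈ (K.erase P₀).filter (fun P => f P = D), P.submodule ≤ W := by
        intro P hP
        obtain ⟨hPe, hfP⟩ := Finset.mem_filter.mp hP
        have hPne : P ≠ P₀ := (Finset.mem_erase.mp hPe).1
        have hPnz : Z.mkQ P.rep ≠ 0 := by
          intro hc
          apply hPne
          apply submodule_injective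
          have h1 : P.submodule ≤ Z := by
            rw [P.submodule_eq]
            refine (Submodule.span_singleton_le_iff_mem _ _).mpr ?_
            rw [Submodule.mkQ_apply, Submodule.Quotient.mk_eq_zero] at hc
            exact hc
          exact Submodule.eq_of_le_of_finrank_le h1
            (by rw [P₀.finrank_submodule, P.finrank_submodule])
        rw [hf] at hfP
        simp only [dif_neg hPnz] at hfP
        have hDm : Projectivization.mk F (Z.mkQ P.rep) hPnz
            = Projectivization.mk F D.rep D.rep_nonzero := by
          rw [hfP, D.mk_rep]
        obtain ⟨c, hc⟩ := (mk_eq_mk_iff' F _ _ hPnz D.rep_nonzero).mp hDm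
        have hdiff : P.rep - c • w ∈ Z := by
          have hmk : Z.mkQ (P.rep - c • w) = 0 := by
            rw [map_sub, map_smul, hw, hc, sub_self]
          rw [Submodule.mkQ_apply, Submodule.Quotient.mk_eq_zero] at hmk
          exact hmk
        have hPrepW : P.rep ∈ W := by
          have hm1 : P.rep - c • w ∈ W := Submodule.mem_sup_left hdiff
          have hm2 : c • w ∈ W := Submodule.mem_sup_right
            (Submodule.smul_mem _ c (Submodule.mem_span_singleton_self w))
          have := W.add_mem hm1 hm2
          simpa using this
        rw [P.submodule_eq]
        exact (Submodule.span_singleton_le_iff_mem _ _).mpr hPrepW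
      have hP₀W : P₀.submodule ≤ W := le_sup_left
      have hcontain : (K.erase P₀).filter (fun P => f P = D) ⊆
          (K.filter (fun P => P.submodule ≤ W)).erase P₀ := by
        intro P hP
        refine Finset.mem_erase.mpr ⟨(Finset.mem_erase.mp (Finset.mem_filter.mp hP).1).1, ?_⟩
        exact Finset.mem_filter.mpr
          ⟨(Finset.mem_erase.mp (Finset.mem_filter.mp hP).1).2, hsub P hP⟩
      have hle := Finset.card_le_card hcontain
      rw [Finset.card_erase_of_mem (Finset.mem_filter.mpr ⟨hP₀, hP₀W⟩)] at hle
      have hbW := hbound W ((hyp_iff W).mpr hWrank)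
      have hpW : pointsOn K W = (K.filter (fun P => P.submodule ≤ W)).card := rfl
      omega
    have hsum := Finset.card_eq_sum_card_fiberwise (f := f) (s := K.erase P₀) (t := univ)
      (fun x _ => Finset.mem_univ _)
    have hcount : (K.erase P₀).card ≤ (Fintype.card F + 1) * (r - 1) := by
      rw [hsum]
      calc ∑ D ∈ univ, ((K.erase P₀).filter (fun P => f P = D)).card
          ≤ ∑ _D ∈ (univ : Finset (ℙ F ((Fin 3 → F) ⧸ Z))), (r-1) :=
            Finset.sum_le_sum (fun D _ => hfib D)
        _ = (Fintype.card F + 1) * (r-1) := by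
            rw [Finset.sum_const, smul_eq_mul, Finset.card_univ, hcP]
    rw [Finset.card_erase_of_mem hP₀, hcard] at hcount
    omega

lemma KD_complete (h2 : (2:F) = 0) {a : F} (ha : ∀ y : F, y^2 + y ≠ a)
    (A : Finset F) (h0A : (0:F) ∈ A) (haddA : ∀ x ∈ A, ∀ y ∈ A, x + y ∈ A)
    (hA2 : 2 ≤ A.card) :
    IsCompleteArc ((Fintype.card F + 1) * (A.card - 1) + 1) A.card (KD a A) := by
  have hq2 : 2 ≤ Fintype.card F := Fintype.one_lt_card
  have hcard := KD_card h2 ha A h0A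
  constructor
  · refine ⟨hcard, ?_, ?_, ?_⟩
    · have h3 : 3 * (A.card - 1) ≤ (Fintype.card F + 1) * (A.card - 1) :=
        Nat.mul_le_mul_right _ (by omega)
      omega
    · intro W hW
      have h01 := KD_count h2 ha A h0A haddA W ((hyp_iff W).mp hW)
      have hpW : pointsOn (KD a A) W = ((KD a A).filter (fun P => P.submodule ≤ W)).card := rfl
      rcases h01.1 with hcase | hcase <;> omega
    · obtain ⟨W, hWr, hWm⟩ := functional_hyp (1:F) 0 0 (by simp)
      refine ⟨W, (hyp_iff W).mpr hWr, ?_⟩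
      have h01 := KD_count h2 ha A h0A haddA W hWr
      have hpW : pointsOn (KD a A) W = ((KD a A).filter (fun P => P.submodule ≤ W)).card := rfl
      rw [hpW]
      apply h01.2
      rw [origin_mem_iff a A W 1 0 0 hWm]
  · intro P hP harc
    obtain ⟨-, -, hbound, -⟩ := harc
    have h0KD : toP (0,0) ∈ KD a A := Finset.mem_image.mpr
      ⟨(0,0), Finset.mem_filter.mpr ⟨Finset.mem_univ _, by simpa [QF] using h0A⟩, rfl⟩
    have hPne : P ≠ toP (0,0) := fun hc => hP (hc ▸ h0KD)
    have hSne : P.submodule ≠ (toP (0,0) : ℙ F (Fin 3 → F)).submodule :=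
      fun hc => hPne (submodule_injective hc)
    set W := P.submodule ⊔ (toP (0,0) : ℙ F (Fin 3 → F)).submodule with hW
    have hWr : finrank F ↥W = 2 :=
      sup_of_two P.finrank_submodule (toP (0,0) : ℙ F (Fin 3 → F)).finrank_submodule hSne
    have hcount := (KD_count h2 ha A h0A haddA W hWr).2 le_sup_right
    have hPin : P.submodule ≤ W := le_sup_left
    have hfilter : (insert P (KD a A)).filter (fun Q => Q.submodule ≤ W)
        = insert P ((KD a A).filter (fun Q => Q.submodule ≤ W)) := by
      rw [Finset.filter_insert, if_pos hPin]
    have hb := hbound W ((hyp_iff W).mpr hWr)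
    have hval : pointsOn (insert P (KD a A)) W = A.card + 1 := by
      show ((insert P (KD a A)).filter (fun Q => Q.submodule ≤ W)).card = A.card + 1
      rw [hfilter, Finset.card_insert_of_notMem
        (fun hc => hP (Finset.mem_of_mem_filter P hc)), hcount]
    omega

end DennistonAux


open DennistonAux Finset Module Projectivization

/-- If `q = 2^h`, `s + 2 = 2^e` and `0 < s ≤ q - 2`, then `m^s(3,q) = (s+1)(q+1)+1`:
there exists a complete `((s+1)(q+1)+1, s+2)`-arc in `PG(2,q)` and no larger complete
`(n, s+2)`-arc exists. -/
theorem stmt3 {F : Type*} [Field F] [Fintype F] {q s e h : ℕ}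
    (hq : Fintype.card F = q) (hqpow : q = 2 ^ h) (hspow : s + 2 = 2 ^ e)
    (hs0 : 0 < s) (hs : s ≤ q - 2) :
    mPow F 3 s = (s + 1) * (q + 1) + 1 ∧
    (∃ K : Finset (Projectivization F (Fin 3 → F)),
      IsCompleteArc ((s + 1) * (q + 1) + 1) (s + 2) K) ∧
    (∀ (n : ℕ) (K : Finset (Projectivization F (Fin 3 → F))),
      IsCompleteArc n (s + 2) K → n ≤ (s + 1) * (q + 1) + 1) := by
  have hq2 : 2 ≤ q := hq ▸ Fintype.one_lt_card
  have hsq : s + 2 ≤ q := by omega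
  have hchar : (2:F) = 0 := by
    obtain ⟨n, hp, hcard2⟩ := FiniteField.card F (ringChar F)
    have hr2 : ringChar F = 2 := by
      have hd : ringChar F ∣ 2 ^ h := by
        rw [← hqpow, ← hq, hcard2]
        exact dvd_pow_self _ (by exact_mod_cast n.pos.ne')
      exact (Nat.prime_dvd_prime_iff_eq hp Nat.prime_two).mp (hp.dvd_of_dvd_pow hd)
    have := CharP.cast_eq_zero F (ringChar F)
    rw [hr2] at this
    exact_mod_cast this
  obtain ⟨a, ha⟩ := exists_aniso hchar
  have hee : (2:ℕ)^e ≤ 2^h := by omega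
  have heh : e ≤ h := (Nat.pow_le_pow_iff_right (by norm_num)).mp hee
  obtain ⟨A, hAcard, h0A, haddA⟩ := exists_subgroup hchar e (by rw [hq, hqpow]; exact hee)
  have hsA : A.card = s + 2 := by rw [hAcard, ← hspow]
  have hA2 : 2 ≤ A.card := by omega
  have hcomplete := KD_complete hchar ha A h0A haddA hA2
  have hnum : (Fintype.card F + 1) * (A.card - 1) + 1 = (s + 1) * (q + 1) + 1 := by
    rw [hsA, hq]
    have hx : s + 2 - 1 = s + 1 := rfl
    rw [hx, Nat.mul_comm]
  rw [hnum, hsA] at hcomplete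
  have hub : ∀ (n : ℕ) (K : Finset (Projectivization F (Fin 3 → F))),
      IsCompleteArc n (s + 2) K → n ≤ (s + 1) * (q + 1) + 1 := by
    intro n K hK
    obtain ⟨⟨hcard, -, hbound, -⟩, -⟩ := hK
    have hle := arc_le K hcard hbound
    have hnum2 : (Fintype.card F + 1) * (s + 2 - 1) + 1 = (s + 1) * (q + 1) + 1 := by
      rw [hq]
      have hx : s + 2 - 1 = s + 1 := rfl
      rw [hx, Nat.mul_comm]
    omega
  refine ⟨?_, ⟨KD a A, hcomplete⟩, hub⟩
  show sSup {n | ∃ K : Finset (Projectivization F (Fin 3 → F)),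
      IsCompleteArc n (3 + s - 1) K} = (s + 1) * (q + 1) + 1
  have h3s : 3 + s - 1 = s + 2 := by omega
  simp only [h3s]
  apply IsGreatest.csSup_eq
  constructor
  · exact ⟨KD a A, hcomplete⟩
  · rintro n ⟨K, hK⟩
    exact hub n K hK

end
end

section
/- Let q be a prime power, k ≥ 3, s ≥ 0, and let K be an (n, k+s-1)-multi-arc in PG(k-1,q) with n > s(q+1) + k - 1. Then every (k-3)-flat of PG(k-1,q) contains at most k-2 points of K (counted with multiplicity); in particular (taking the case of (k-3)-flats spanned by fewer points), every point of K has multiplicity 1, i.e., K is a set. -/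
open scoped Classical

noncomputable section

/-!
Let `W` be a flat carrying `m` points of `K`. Every point outside `W` lies on exactly one
of the `N` flats one dimension above `W`, so if each of these carries at most `b` points,
then `|K| + (N - 1) m ≤ N b`. For a codimension-two flat, `N ≤ q + 1` and `b = k + s - 1`,
so `m ≥ k - 1` would force `n ≤ s (q + 1) + k - 1`. Downward induction on the dimension,
with `b = dim W + 1` (where `m ≥ b` would force `n ≤ b`), then bounds the number of points
on a flat of dimension `j ≤ k - 2` by `j`; for `j = 1` this says that `K` is a set.
-/

open Module Submodule
open scoped LinearAlgebra.Projectivization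

section DoubleCounting

variable {F V : Type*} [Field F] [AddCommGroup V] [Module F V]

lemma mPointsOn_cons (K : Multiset (ℙ F V)) (P : ℙ F V) (W : Submodule F V) :
    mPointsOn (P ::ₘ K) W = (if P.submodule ≤ W then 1 else 0) + mPointsOn K W := by
  by_cases h : P.submodule ≤ W <;> simp [mPointsOn, h, add_comm]

lemma count_le_mPointsOn_submodule (K : Multiset (ℙ F V)) (P : ℙ F V) :
    K.count P ≤ mPointsOn K P.submodule := by
  rw [Multiset.count_eq_card_filter_eq]
  exact Multiset.card_le_card <| Multiset.monotone_filter_right K fun Q hQ => hQ ▸ le_rfl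

lemma sum_mPointsOn_add_mPointsOn (K : Multiset (ℙ F V)) (W : Submodule F V)
    (S : Finset (Submodule F V)) (hWS : ∀ U ∈ S, W ≤ U)
    (hcover : ∀ P : ℙ F V, ¬ P.submodule ≤ W → (S.filter (P.submodule ≤ ·)).card = 1) :
    ∑ U ∈ S, mPointsOn K U + mPointsOn K W = S.card * mPointsOn K W + Multiset.card K := by
  induction K using Multiset.induction_on with
  | empty => simp [mPointsOn]
  | cons P K ih =>
    have hP : ∑ U ∈ S, (if P.submodule ≤ U then 1 else 0) + (if P.submodule ≤ W then 1 else 0)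
        = S.card * (if P.submodule ≤ W then 1 else 0) + 1 := by
      by_cases h : P.submodule ≤ W
      · simp [h, Finset.sum_ite_of_true fun U hU => h.trans (hWS U hU)]
      · simp [h, Finset.sum_boole, hcover P h]
    simp only [mPointsOn_cons, Multiset.card_cons, Finset.sum_add_distrib, mul_add]
    omega

lemma card_le_of_le_mPointsOn (K : Multiset (ℙ F V)) (W : Submodule F V)
    (S : Finset (Submodule F V)) (hWS : ∀ U ∈ S, W ≤ U)
    (hcover : ∀ P : ℙ F V, ¬ P.submodule ≤ W → (S.filter (P.submodule ≤ ·)).card = 1)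
    (hS : S.Nonempty) {a b : ℕ} (hb : ∀ U ∈ S, mPointsOn K U ≤ b)
    (ha : a ≤ mPointsOn K W) (hab : a ≤ b) :
    Multiset.card K ≤ a + S.card * (b - a) := by
  have hcount := sum_mPointsOn_add_mPointsOn K W S hWS hcover
  have hsum : ∑ U ∈ S, mPointsOn K U ≤ S.card * b := by
    simpa using Finset.sum_le_sum hb
  obtain ⟨N, hN⟩ := Nat.exists_eq_add_of_le' (Finset.card_pos.2 hS)
  obtain ⟨c, rfl⟩ := Nat.exists_eq_add_of_le hab
  rw [hN] at hcount hsum ⊢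
  rw [Nat.add_sub_cancel_left]
  nlinarith

end DoubleCounting

section Flats

variable {F V : Type*} [Field F] [AddCommGroup V] [Module F V]

def flatsAbove (W : Submodule F V) : Set (Submodule F V) :=
  {U | W ≤ U ∧ finrank F U = finrank F W + 1}

variable [FiniteDimensional F V]

lemma finite_flatsAbove [Finite F] (W : Submodule F V) : (flatsAbove W).Finite := by
  have : Finite V := Module.finite_of_finite F
  have : Finite (Submodule F V) := Finite.of_injective _ SetLike.coe_injective
  exact Set.toFinite _

lemma eq_sup_span_singleton_of_mem_flatsAbove {W U : Submodule F V} (hU : U ∈ flatsAbove W)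
    {x : V} (hxU : x ∈ U) (hxW : x ∉ W) : U = W ⊔ span F {x} :=
  (eq_of_le_of_finrank_le (sup_le hU.1 ((span_singleton_le_iff_mem x U).2 hxU))
    (by rw [finrank_sup_span_singleton hxW, hU.2])).symm

lemma sup_span_singleton_mem_flatsAbove {W : Submodule F V} {x : V} (hxW : x ∉ W) :
    W ⊔ span F {x} ∈ flatsAbove W :=
  ⟨le_sup_left, finrank_sup_span_singleton hxW⟩

lemma flatsAbove_nonempty {W : Submodule F V} (hW : finrank F W < finrank F V) :
    (flatsAbove W).Nonempty := by
  obtain ⟨x, -, hxW⟩ := SetLike.exists_of_lt (lt_top_of_finrank_lt_finrank (by simpa using hW))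
  exact ⟨_, sup_span_singleton_mem_flatsAbove hxW⟩

lemma card_filter_toFinset_flatsAbove {W : Submodule F V} (hfin : (flatsAbove W).Finite)
    (P : ℙ F V) (hPW : ¬ P.submodule ≤ W) :
    (hfin.toFinset.filter (P.submodule ≤ ·)).card = 1 := by
  rw [P.submodule_eq, span_singleton_le_iff_mem] at hPW
  rw [Finset.card_eq_one]
  refine ⟨W ⊔ span F {P.rep}, Finset.eq_singleton_iff_unique_mem.2 ⟨?_, fun U hU => ?_⟩⟩
  · rw [Finset.mem_filter, Set.Finite.mem_toFinset, P.submodule_eq]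
    exact ⟨sup_span_singleton_mem_flatsAbove hPW, le_sup_right⟩
  · rw [Finset.mem_filter, Set.Finite.mem_toFinset, P.submodule_eq,
      span_singleton_le_iff_mem] at hU
    exact eq_sup_span_singleton_of_mem_flatsAbove hU.1 hU.2 hPW

/-- The flats above a codimension-two flat `W` are the points of the projective line
`ℙ(V ⧸ W)`. -/
lemma ncard_flatsAbove_le [Finite F] {W : Submodule F V}
    (hW : finrank F W + 2 = finrank F V) :
    (flatsAbove W).ncard ≤ Nat.card F + 1 := by
  have : Finite (ℙ F (V ⧸ W)) :=
    (Projectivization.finite_iff_of_finite F _).2 (Module.finite_of_finite F)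
  have hQ : finrank F (V ⧸ W) = 2 := by
    have := W.finrank_quotient_add_finrank
    omega
  rw [← Projectivization.card_of_finrank_two F (V ⧸ W) hQ,
    ← Set.ncard_range_of_injective Projectivization.submodule_injective]
  refine Set.ncard_le_ncard_of_injOn (fun U => U.map W.mkQ) ?_ ?_ (Set.toFinite _)
  · intro U hU
    obtain ⟨x, hxU, hxW⟩ := SetLike.exists_of_lt <| hU.1.lt_of_ne <| by
      rintro rfl
      exact absurd hU.2 (by omega)
    have hx0 : W.mkQ x ≠ 0 := by simpa using hxW
    refine ⟨Projectivization.mk F _ hx0, ?_⟩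
    rw [Projectivization.submodule_mk, eq_sup_span_singleton_of_mem_flatsAbove hU hxU hxW,
      Submodule.map_sup, map_span, Set.image_singleton, mkQ_map_self, bot_sup_eq]
  · intro U₁ hU₁ U₂ hU₂ h
    rw [← sup_eq_right.2 hU₁.1, ← sup_eq_right.2 hU₂.1, ← comap_map_mkQ, ← comap_map_mkQ]
    exact congrArg _ h

end Flats

section MultiArc

variable {F V : Type*} [Field F] [Finite F] [AddCommGroup V] [Module F V]
  [FiniteDimensional F V]

lemma card_le_of_le_mPointsOn_flatsAbove (K : Multiset (ℙ F V)) {W : Submodule F V}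
    (hW : finrank F W < finrank F V) {a b : ℕ} (hb : ∀ U ∈ flatsAbove W, mPointsOn K U ≤ b)
    (ha : a ≤ mPointsOn K W) (hab : a ≤ b) :
    Multiset.card K ≤ a + (flatsAbove W).ncard * (b - a) := by
  have hfin := finite_flatsAbove (F := F) W
  rw [Set.ncard_eq_toFinset_card _ hfin]
  refine card_le_of_le_mPointsOn K W hfin.toFinset (fun U hU => ?_)
    (card_filter_toFinset_flatsAbove hfin) (by simpa using flatsAbove_nonempty hW)
    (fun U hU => hb U (by simpa using hU)) ha hab
  exact (hfin.mem_toFinset.1 hU).1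

lemma mPointsOn_le_of_finrank_add_two {K : Multiset (ℙ F V)} {W : Submodule F V} {s : ℕ}
    (hW : finrank F W + 2 = finrank F V)
    (hK : ∀ U : Submodule F V, IsHyp F U → mPointsOn K U ≤ finrank F W + 1 + s)
    (hn : finrank F W + 1 + s * (Nat.card F + 1) < Multiset.card K) :
    mPointsOn K W ≤ finrank F W := by
  by_contra! h
  have hcard := card_le_of_le_mPointsOn_flatsAbove K (by omega)
    (fun U hU => hK U (by rw [IsHyp, hU.2]; omega)) h (Nat.le_add_right _ s)
  rw [Nat.add_sub_cancel_left] at hcard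
  nlinarith [ncard_flatsAbove_le hW]

lemma mPointsOn_le_finrank_of_le {K : Multiset (ℙ F V)} {d : ℕ} (hd : d < Multiset.card K)
    (hdV : d ≤ finrank F V) (hK : ∀ U : Submodule F V, finrank F U = d → mPointsOn K U ≤ d)
    {W : Submodule F V} (hW : finrank F W ≤ d) : mPointsOn K W ≤ finrank F W := by
  obtain ⟨i, hi⟩ := Nat.exists_eq_add_of_le hW
  induction i generalizing W with
  | zero => exact (hK W (by omega)).trans_eq (by omega)
  | succ i ih =>
    by_contra! h
    have hcard := card_le_of_le_mPointsOn_flatsAbove K (W := W) (a := finrank F W + 1)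
      (by omega) (fun U ⟨_, hU⟩ => (ih (by omega) (by omega)).trans_eq hU) h le_rfl
    rw [Nat.sub_self, mul_zero, add_zero] at hcard
    omega

end MultiArc

/-- If an `(n, k+s-1)`-multi-arc `K` in `PG(k-1,q)` has `n > s(q+1) + k - 1`, then
every `(k-3)`-flat (submodule of linear dimension `k-2`) contains at most `k-2`
points of `K` (with multiplicity); in particular every point of `K` has multiplicity
one, i.e. `K` is a set. -/
theorem stmt6 {F : Type*} [Field F] [Fintype F] {q k s n : ℕ}
    (hq : Fintype.card F = q) (hk : 3 ≤ k)
    (K : Multiset (Projectivization F (Fin k → F)))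
    (hK : IsMultiArc n (k + s - 1) K)
    (hn : s * (q + 1) + k - 1 < n) :
    (∀ W : Submodule F (Fin k → F), Module.finrank F W = k - 2 →
      mPointsOn K W ≤ k - 2) ∧
    K.Nodup := by
  obtain ⟨hcard, -, hhyp, -⟩ := hK
  have hV : finrank F (Fin k → F) = k := finrank_fin_fun F
  have hflat : ∀ W : Submodule F (Fin k → F), finrank F W = k - 2 → mPointsOn K W ≤ k - 2 := by
    intro W hW
    rw [← hW]
    refine mPointsOn_le_of_finrank_add_two (s := s) (by omega) (fun U hU => ?_) ?_
    · have := hhyp U hU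
      omega
    · rw [Nat.card_eq_fintype_card, hq, hcard]
      omega
  refine ⟨hflat, Multiset.nodup_iff_count_le_one.2 fun P => ?_⟩
  calc K.count P ≤ mPointsOn K P.submodule := count_le_mPointsOn_submodule K P
    _ ≤ finrank F P.submodule :=
      mPointsOn_le_finrank_of_le (by omega) (by omega) hflat (by rw [P.finrank_submodule]; omega)
    _ = 1 := P.finrank_submodule

end
end

section
/- Let q be a prime power and s an integer with 0 < s < q-2 and (s+2) dividing q. Let K be an (n, s+3)-arc in PG(3,q) with n = (s+1)(q+1) + 1. Then for any two distinct points P_i, P_j of K there is exactly one tangent plane of K containing both P_i and P_j. -/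
open scoped Classical

noncomputable section

/-!
Let `L` be the line joining the two points. The `q + 1` planes through `L` cover every point of
`K` off `L` exactly once and every point of `K` on `L` exactly `q + 1` times, so their point counts
add up to `n + q t`, where `t ≥ 2` is the number of points of `K` on `L`. Each count is at most
`s + 3` and `(q + 1)(s + 3) = n + 2q + 1`, which forces `t = 2` and leaves a total deficit of one:
exactly one plane through `L` has fewer than `s + 3` points, and it is the tangent plane.
-/

open Module Submodule Projectivization
open scoped LinearAlgebra.Projectivization

section Pencil

variable {F V : Type*} [Field F] [AddCommGroup V] [Module F V]

noncomputable instance Submodule.fintypeOfFinite [Finite V] : Fintype (Submodule F V) :=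
  Fintype.ofFinite _

lemma Projectivization.disjoint_submodule_of_not_le {W : Submodule F V} {P : ℙ F V}
    (h : ¬ P.submodule ≤ W) : Disjoint W P.submodule := by
  induction P using Projectivization.ind with
  | h v hv =>
    rw [submodule_mk, span_singleton_le_iff_mem] at *
    exact (disjoint_span_singleton' hv).2 h

lemma Projectivization.finrank_sup_submodule [FiniteDimensional F V] {W : Submodule F V}
    {P : ℙ F V} (h : ¬ P.submodule ≤ W) : finrank F ↥(W ⊔ P.submodule) = finrank F W + 1 := by
  have := finrank_sup_add_finrank_inf_eq W P.submodule
  rw [(disjoint_submodule_of_not_le h).eq_bot, finrank_bot, P.finrank_submodule] at this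
  omega

lemma Projectivization.submodule_le_submodule_iff {P Q : ℙ F V} :
    P.submodule ≤ Q.submodule ↔ P = Q := by
  refine ⟨fun h => submodule_injective ?_, fun h => h ▸ le_rfl⟩
  exact eq_of_le_of_finrank_eq h (by rw [P.finrank_submodule, Q.finrank_submodule])

lemma Submodule.finrank_comap_mkQ [FiniteDimensional F V] (L : Submodule F V)
    (H : Submodule F (V ⧸ L)) : finrank F (H.comap L.mkQ) = finrank F H + finrank F L := by
  have := (L.mkQ.domRestrict (H.comap L.mkQ)).finrank_range_add_finrank_ker
  rwa [LinearMap.range_domRestrict, map_comap_eq_of_surjective L.mkQ_surjective,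
    LinearMap.ker_domRestrict, ker_mkQ,
    (comapSubtypeEquivOfLe (le_comap_mkQ L H)).finrank_eq, eq_comm] at this

def hyperplanesThrough [Finite V] (L : Submodule F V) : Finset (Submodule F V) :=
  Finset.univ.filter fun W => L ≤ W ∧ IsHyp F W

variable [Finite V] {L : Submodule F V}

lemma mem_hyperplanesThrough {W : Submodule F V} :
    W ∈ hyperplanesThrough L ↔ L ≤ W ∧ IsHyp F W := by
  simp [hyperplanesThrough]

lemma card_hyperplanesThrough [Fintype F] (hL : finrank F L + 2 = finrank F V) :
    (hyperplanesThrough L).card = Fintype.card F + 1 := by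
  have hQ : finrank F (V ⧸ L) = 2 := by have := L.finrank_quotient_add_finrank; omega
  have hHyp (H : Submodule F (V ⧸ L)) : IsHyp F (H.comap L.mkQ) ↔ finrank F H = 1 := by
    rw [IsHyp, finrank_comap_mkQ]; omega
  have hcomap {W : Submodule F V} (hW : L ≤ W) : (W.map L.mkQ).comap L.mkQ = W := by
    rw [comap_map_mkQ, sup_eq_right.2 hW]
  let e : hyperplanesThrough L ≃ {H : Submodule F (V ⧸ L) // finrank F H = 1} :=
    { toFun W := ⟨W.1.map L.mkQ, by
        obtain ⟨hLW, hW⟩ := mem_hyperplanesThrough.1 W.2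
        rw [← hHyp, hcomap hLW]; exact hW⟩
      invFun H := ⟨H.1.comap L.mkQ, mem_hyperplanesThrough.2 ⟨le_comap_mkQ L H, (hHyp H).2 H.2⟩⟩
      left_inv W := Subtype.ext (hcomap (mem_hyperplanesThrough.1 W.2).1)
      right_inv H := Subtype.ext (map_comap_eq_of_surjective L.mkQ_surjective H) }
  rw [← Nat.card_eq_finsetCard, Nat.card_congr (e.trans (equivSubmodule F _).symm),
    card_of_finrank_two F _ hQ, Nat.card_eq_fintype_card]

lemma filter_hyperplanesThrough_of_not_le (hL : finrank F L + 2 = finrank F V) {P : ℙ F V}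
    (hP : ¬ P.submodule ≤ L) :
    (hyperplanesThrough L).filter (P.submodule ≤ ·) = {L ⊔ P.submodule} := by
  have hrank := finrank_sup_submodule hP
  ext W
  simp only [Finset.mem_filter, mem_hyperplanesThrough, Finset.mem_singleton, IsHyp]
  constructor
  · rintro ⟨⟨hLW, hW⟩, hPW⟩
    exact (eq_of_le_of_finrank_eq (sup_le hLW hPW) (by omega)).symm
  · rintro rfl
    exact ⟨⟨le_sup_left, by omega⟩, le_sup_right⟩

lemma sum_pointsOn_hyperplanesThrough [Fintype F] (K : Finset (ℙ F V))
    (hL : finrank F L + 2 = finrank F V) :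
    ∑ W ∈ hyperplanesThrough L, pointsOn K W = K.card + Fintype.card F * pointsOn K L := by
  have hincid (P : ℙ F V) : ((hyperplanesThrough L).filter (P.submodule ≤ ·)).card
      = 1 + Fintype.card F * if P.submodule ≤ L then 1 else 0 := by
    by_cases hP : P.submodule ≤ L
    · rw [Finset.filter_true_of_mem fun W hW => hP.trans (mem_hyperplanesThrough.1 hW).1,
        card_hyperplanesThrough hL, if_pos hP]
      ring
    · rw [filter_hyperplanesThrough_of_not_le hL hP, if_neg hP]
      simp
  simp only [pointsOn, Finset.card_filter]
  rw [Finset.sum_comm]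
  simp only [hincid, Finset.sum_add_distrib, ← Finset.mul_sum,
    Finset.sum_boole, Finset.sum_const, smul_eq_mul, mul_one, Nat.cast_id]

end Pencil

lemma Finset.existsUnique_ne_zero_of_sum_eq_one {ι : Type*} {s : Finset ι} {f : ι → ℕ}
    (h : ∑ i ∈ s, f i = 1) : ∃! i, i ∈ s ∧ f i ≠ 0 := by
  obtain ⟨i, hi, hfi⟩ := exists_ne_zero_of_sum_ne_zero (h ▸ one_ne_zero)
  refine ⟨i, ⟨hi, hfi⟩, fun j ⟨hj, hfj⟩ => ?_⟩
  by_contra hji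
  have := sum_le_sum_of_subset (f := f) (insert_subset hj (singleton_subset_iff.2 hi))
  rw [sum_pair hji] at this
  omega

theorem existsUnique_deficient_hyperplane {F V : Type*} [Field F] [Fintype F] [AddCommGroup V]
    [Module F V] [Finite V] {K : Finset (ℙ F V)} {s : ℕ}
    (hcard : K.card = (s + 1) * (Fintype.card F + 1) + 1)
    (hmax : ∀ W : Submodule F V, IsHyp F W → pointsOn K W ≤ s + 3)
    {L : Submodule F V} (hL : finrank F L + 2 = finrank F V) (htwo : 2 ≤ pointsOn K L) :
    ∃! W, W ∈ hyperplanesThrough L ∧ pointsOn K W < s + 3 := by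
  set q := Fintype.card F
  have hq : 2 ≤ q := Fintype.one_lt_card
  have hle : ∀ W ∈ hyperplanesThrough L, pointsOn K W ≤ s + 3 :=
    fun W hW => hmax W (mem_hyperplanesThrough.1 hW).2
  have hsum := sum_pointsOn_hyperplanesThrough K hL
  have hbound := Finset.sum_le_card_nsmul _ _ _ hle
  rw [hsum, card_hyperplanesThrough hL, smul_eq_mul, hcard] at hbound
  have htwo' : pointsOn K L = 2 := by
    by_contra h
    nlinarith [Nat.mul_le_mul_left q (show 3 ≤ pointsOn K L by omega)]
  have hdeficit : ∑ W ∈ hyperplanesThrough L, (s + 3 - pointsOn K W) = 1 := by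
    rw [Finset.sum_tsub_distrib _ hle, Finset.sum_const, card_hyperplanesThrough hL, smul_eq_mul,
      hsum, hcard, htwo']
    rw [htwo'] at hbound
    zify [hbound]
    ring
  simpa only [Nat.sub_ne_zero_iff_lt] using Finset.existsUnique_ne_zero_of_sum_eq_one hdeficit

theorem stmt10_general {F : Type*} [Field F] [Fintype F] {q s n : ℕ}
    (hq : Fintype.card F = q)
    (K : Finset (Projectivization F (Fin 4 → F)))
    (hn : n = (s + 1) * (q + 1) + 1)
    (hK : IsArc n (s + 3) K)
    (Pi Pj : Projectivization F (Fin 4 → F)) (hPi : Pi ∈ K) (hPj : Pj ∈ K)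
    (hne : Pi ≠ Pj) :
    ∃! H : Submodule F (Fin 4 → F),
      IsTangent K (s + 3) H ∧ Pi.submodule ≤ H ∧ Pj.submodule ≤ H := by
  subst hq hn
  obtain ⟨hcard, -, hmax, -⟩ := hK
  have hL : finrank F ↥(Pi.submodule ⊔ Pj.submodule) + 2 = finrank F (Fin 4 → F) := by
    rw [finrank_sup_submodule (submodule_le_submodule_iff.not.2 hne.symm), Pi.finrank_submodule,
      finrank_fin_fun]
  have htwo : 2 ≤ pointsOn K (Pi.submodule ⊔ Pj.submodule) :=
    Finset.one_lt_card.2 ⟨Pi, Finset.mem_filter.2 ⟨hPi, le_sup_left⟩,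
      Pj, Finset.mem_filter.2 ⟨hPj, le_sup_right⟩, hne⟩
  refine (existsUnique_congr fun H => ?_).1 (existsUnique_deficient_hyperplane hcard hmax hL htwo)
  rw [mem_hyperplanesThrough, sup_le_iff, IsTangent]
  refine ⟨fun ⟨⟨⟨hi, hj⟩, hH⟩, hlt⟩ => ⟨⟨hH, ?_, hlt⟩, hi, hj⟩,
    fun ⟨⟨hH, _, hlt⟩, hi, hj⟩ => ⟨⟨⟨hi, hj⟩, hH⟩, hlt⟩⟩
  exact Finset.card_pos.2 ⟨Pi, Finset.mem_filter.2 ⟨hPi, hi⟩⟩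

/-- In `PG(3,q)`, for an `((s+1)(q+1)+1, s+3)`-arc `K` with `0 < s < q-2` and
`(s+2) ∣ q`, any two distinct points of `K` lie on exactly one common tangent plane
of `K`. -/
theorem stmt10 {F : Type*} [Field F] [Fintype F] {q s n : ℕ}
    (hq : Fintype.card F = q) (hs0 : 0 < s) (hs : s < q - 2)
    (hdvd : (s + 2) ∣ q)
    (K : Finset (Projectivization F (Fin 4 → F)))
    (hn : n = (s + 1) * (q + 1) + 1)
    (hK : IsArc n (s + 3) K)
    (Pi Pj : Projectivization F (Fin 4 → F)) (hPi : Pi ∈ K) (hPj : Pj ∈ K)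
    (hne : Pi ≠ Pj) :
    ∃! H : Submodule F (Fin 4 → F),
      IsTangent K (s + 3) H ∧ Pi.submodule ≤ H ∧ Pj.submodule ≤ H :=
  stmt10_general hq K hn hK Pi Pj hPi hPj hne

end
end

section
/- Let q be a prime power, k ≥ 3, s ≥ 0, and let K be an (n, k+s-1)-arc in PG(k-1,q) with n = (s+1)(q+1) + k - 2 (i.e., K is a maximal arc). Then K is complete: no point of PG(k-1,q) can be added to K to form an (n+1, k+s-1)-arc. -/
open scoped Classical

noncomputable section

section ArcHelpers

open Module Submodule

variable {F V : Type*} [Field F] [AddCommGroup V] [Module F V] [FiniteDimensional F V]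

lemma finrank_sup_point_aux (W L : Submodule F V) (hL : Module.finrank F L = 1)
    (h : ¬ L ≤ W) : Module.finrank F ↥(W ⊔ L) = Module.finrank F W + 1 := by
  have hinf0 : Module.finrank F ↥(W ⊓ L) = 0 := by
    by_contra h0
    have hle : Module.finrank F ↥(W ⊓ L) ≤ 1 := hL ▸ Submodule.finrank_mono inf_le_right
    have heq : W ⊓ L = L := Submodule.eq_of_le_of_finrank_le inf_le_right (by omega)
    exact h (heq ▸ inf_le_left)
  have := Submodule.finrank_sup_add_finrank_inf_eq W L
  omega

lemma exists_hyp_ge : ∀ (e : ℕ) (W : Submodule F V),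
    Module.finrank F V = Module.finrank F W + e + 1 →
    ∃ H : Submodule F V, W ≤ H ∧ Module.finrank F H + 1 = Module.finrank F V := by
  intro e
  induction e with
  | zero => exact fun W hW => ⟨W, le_rfl, by omega⟩
  | succ e ih =>
    intro W hW
    obtain ⟨v, hv⟩ := Submodule.exists_of_finrank_lt W (by omega)
    have hv1 : v ∉ W := by simpa using hv 1 one_ne_zero
    have hv0 : v ≠ 0 := fun h => hv1 (h ▸ W.zero_mem)
    have hrank : Module.finrank F ↥(W ⊔ F ∙ v) = Module.finrank F W + 1 :=
      finrank_sup_point_aux _ _ (finrank_span_singleton hv0)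
        (by rw [Submodule.span_singleton_le_iff_mem]; exact hv1)
    obtain ⟨H, hH, hH'⟩ := ih (W ⊔ F ∙ v) (by omega)
    exact ⟨H, le_trans le_sup_left hH, hH'⟩

end ArcHelpers

lemma li_finset {F V : Type*} [Field F] [AddCommGroup V] [Module F V]
    {s : Finset V} {t : Set V} (h : LinearIndependent F ((↑) : t → V))
    (hsub : ∀ x ∈ s, x ∈ t) : LinearIndependent F ((↑) : s → V) :=
  h.comp (fun x => ⟨x.1, hsub x.1 x.2⟩)
    (fun a b hab => Subtype.ext (congrArg Subtype.val hab : (a : V) = b))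



/-- A maximal arc is complete: if `K` is an `(n, k+s-1)`-arc in `PG(k-1,q)` with
`n = (s+1)(q+1)+k-2`, then no point can be added to `K` to form an
`(n+1, k+s-1)`-arc. -/
theorem stmt13 {F : Type*} [Field F] [Fintype F] {q k s n : ℕ}
    (hq : Fintype.card F = q) (hk : 3 ≤ k)
    (K : Finset (Projectivization F (Fin k → F)))
    (hn : n = (s + 1) * (q + 1) + k - 2)
    (hK : IsArc n (k + s - 1) K) :
    ∀ P : Projectivization F (Fin k → F), P ∉ K →
      ¬ IsArc (n + 1) (k + s - 1) (insert P K) := by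
  intro P hP harc
  obtain ⟨hcard, hrn, hbound, -⟩ := harc
  set r := k + s - 1 with hr
  set K' := insert P K with hK'
  have hV : Module.finrank F (Fin k → F) = k := Module.finrank_fin_fun F
  have hq2 : 2 ≤ q := by rw [← hq]; exact Fintype.one_lt_card
  -- K' spans the whole space
  set sV : Set (Fin k → F) :=
    Projectivization.rep '' (K' : Set (Projectivization F (Fin k → F))) with hsV
  have hPmem : ∀ Q : Projectivization F (Fin k → F), Q ∈ K' →
      Q.submodule ≤ Submodule.span F sV := by
    intro Q hQ
    rw [Projectivization.submodule_eq]
    exact Submodule.span_mono (Set.singleton_subset_iff.mpr ⟨Q, hQ, rfl⟩)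
  have hspan : Submodule.span F sV = ⊤ := by
    by_contra hne
    have hlt : Module.finrank F (Submodule.span F sV) < k := by
      have h := Submodule.finrank_lt (K := F) hne
      rwa [hV] at h
    obtain ⟨H, hH1, hH2⟩ := exists_hyp_ge (k - Module.finrank F (Submodule.span F sV) - 1)
      (Submodule.span F sV) (by omega)
    have hhyp : IsHyp F H := by rw [IsHyp, hV]; omega
    have hall : pointsOn K' H = n + 1 := by
      rw [pointsOn, Finset.filter_true_of_mem (fun Q hQ => le_trans (hPmem Q hQ) hH1), hcard]
    have := hbound H hhyp
    omega
  -- extract a basis-like subset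
  obtain ⟨b, hbsub, hbspan, hbind⟩ := exists_linearIndependent F sV
  rw [hspan] at hbspan
  have hbfin : b.Finite := hbind.setFinite
  set B := hbfin.toFinset with hB
  have hBb : (B : Set (Fin k → F)) = b := hbfin.coe_toFinset
  have hmemb : ∀ x ∈ B, x ∈ b := fun x hx => by rw [← hBb]; exact_mod_cast hx
  have hBcard : B.card = k := by
    have h1 : Module.finrank F (Submodule.span F (B : Set (Fin k → F))) = B.card :=
      finrank_span_finset_eq_card (li_finset hbind hmemb)
    rw [hBb, hbspan, finrank_top, hV] at h1
    omega
  obtain ⟨B', hB'sub, hB'card⟩ := Finset.exists_subset_card_eq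
    (show k - 2 ≤ B.card by omega)
  set S0 := Submodule.span F (B' : Set (Fin k → F)) with hS0
  have hB'b : (B' : Set (Fin k → F)) ⊆ b := by
    rw [← hBb]; exact Finset.coe_subset.mpr hB'sub
  have hS0rank : Module.finrank F S0 = k - 2 := by
    rw [hS0, finrank_span_finset_eq_card
      (li_finset hbind (fun x hx => hmemb x (hB'sub hx))), hB'card]
  have key : ∀ x ∈ B, ∀ t : Finset (Fin k → F), (t : Set (Fin k → F)) ⊆ b → x ∉ t →
      x ∉ Submodule.span F (t : Set (Fin k → F)) := by
    intro x hx t ht hxt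
    have hxb : x ∈ b := hmemb x hx
    have h2 := hbind.notMem_span_image (s := {y : b | (y : Fin k → F) ∈ t})
      (x := ⟨x, hxb⟩) (by simpa using hxt)
    have himg : (Subtype.val '' {y : b | (y : Fin k → F) ∈ t}) = (t : Set (Fin k → F)) := by
      ext u
      constructor
      · rintro ⟨⟨u, hu⟩, hmem, rfl⟩; exact hmem
      · intro hu; exact ⟨⟨u, ht hu⟩, hu, rfl⟩
    rwa [himg] at h2
  have hne0 : ∀ x ∈ B, x ≠ 0 := fun x hx => hbind.ne_zero ⟨x, hmemb x hx⟩
  have hsubsV : ∀ x ∈ B, x ∈ sV := fun x hx => hbsub (hmemb x hx)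
  have hmkmem : ∀ (x : Fin k → F) (hx0 : x ≠ 0), x ∈ sV → Projectivization.mk F x hx0 ∈ K' := by
    rintro x hx0 ⟨Q, hQ, rfl⟩
    rwa [Projectivization.mk_rep Q]
  set g : (Fin k → F) → Projectivization F (Fin k → F) :=
    fun x => if h : x = 0 then P else Projectivization.mk F x h with hg
  have hgB : ∀ (x : Fin k → F) (hx : x ≠ 0), g x = Projectivization.mk F x hx := by
    intro x hx; rw [hg]; simp only [dif_neg hx]
  -- m ≥ k - 2
  have hm1 : k - 2 ≤ pointsOn K' S0 := by
    rw [← hB'card, pointsOn]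
    apply Finset.card_le_card_of_injOn g
    · intro x hx
      have hxB := hB'sub hx
      rw [Finset.mem_coe, Finset.mem_filter, hgB x (hne0 x hxB)]
      refine ⟨hmkmem x (hne0 x hxB) (hsubsV x hxB), ?_⟩
      rw [Projectivization.submodule_mk, Submodule.span_singleton_le_iff_mem]
      exact Submodule.subset_span (Finset.mem_coe.mpr hx)
    · intro x hx y hy hxy
      by_contra hne
      rw [hgB x (hne0 x (hB'sub hx)), hgB y (hne0 y (hB'sub hy)),
        Projectivization.mk_eq_mk_iff'] at hxy
      obtain ⟨a, ha⟩ := hxy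
      refine key x (hB'sub hx) {y} ?_ (by simpa using hne) ?_
      · simpa using hmemb y (hB'sub hy)
      · rw [Finset.coe_singleton]
        exact Submodule.mem_span_singleton.mpr ⟨a, ha⟩
  -- a point of K' outside S0
  obtain ⟨v0, hv0B, hv0B'⟩ : ∃ v0 ∈ B, v0 ∉ B' := by
    by_contra hcon
    push_neg at hcon
    have := Finset.card_le_card hcon
    omega
  have hv0S0 : v0 ∉ S0 := key v0 hv0B B' hB'b hv0B'
  set P0 := Projectivization.mk F v0 (hne0 v0 hv0B) with hP0def
  have hP0 : P0 ∈ K' := hmkmem v0 (hne0 v0 hv0B) (hsubsV v0 hv0B)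
  have hP0sub : ¬ P0.submodule ≤ S0 := by
    rw [hP0def, Projectivization.submodule_mk, Submodule.span_singleton_le_iff_mem]
    exact hv0S0
  -- the secant decomposition
  set T := K'.filter (fun Q => ¬ Q.submodule ≤ S0) with hT
  have hsplit : pointsOn K' S0 + T.card = n + 1 := by
    rw [pointsOn, hT, Finset.card_filter_add_card_filter_not, hcard]
  set f : Projectivization F (Fin k → F) → Submodule F (Fin k → F) :=
    fun Q => S0 ⊔ Q.submodule with hf
  set HS := T.image f with hHS
  have hHSprop : ∀ H ∈ HS, S0 ≤ H ∧ Module.finrank F H = k - 1 := by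
    intro H hH
    obtain ⟨Q, hQT, rfl⟩ := Finset.mem_image.mp hH
    have hQn : ¬ Q.submodule ≤ S0 := (Finset.mem_filter.mp hQT).2
    refine ⟨le_sup_left, ?_⟩
    rw [hf]
    simp only
    rw [finrank_sup_point_aux S0 Q.submodule Q.finrank_submodule hQn, hS0rank]
    omega
  have hHhyp : ∀ H ∈ HS, IsHyp F H := by
    intro H hH
    rw [IsHyp, hV, (hHSprop H hH).2]
  -- m ≤ r
  have hm2 : pointsOn K' S0 ≤ r := by
    have hP0T : P0 ∈ T := Finset.mem_filter.mpr ⟨hP0, hP0sub⟩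
    have hfH : f P0 ∈ HS := Finset.mem_image_of_mem f hP0T
    have hsubs : K'.filter (fun Q => Q.submodule ≤ S0) ⊆
        K'.filter (fun Q => Q.submodule ≤ f P0) := by
      apply Finset.monotone_filter_right
      intro Q _ hQ
      exact le_trans hQ le_sup_left
    exact le_trans (Finset.card_le_card hsubs) (hbound _ (hHhyp _ hfH))
  -- every fiber is small
  have hfib : ∀ H ∈ HS, (T.filter (fun Q => f Q = H)).card + pointsOn K' S0 ≤ r := by
    intro H hH
    have hdisj : Disjoint (T.filter (fun Q => f Q = H))
        (K'.filter (fun Q => Q.submodule ≤ S0)) := by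
      rw [Finset.disjoint_left]
      intro Q hQ1 hQ2
      exact (Finset.mem_filter.mp ((Finset.filter_subset _ _) hQ1)).2
        (Finset.mem_filter.mp hQ2).2
    have hsub2 : (T.filter (fun Q => f Q = H)) ∪ K'.filter (fun Q => Q.submodule ≤ S0) ⊆
        K'.filter (fun Q => Q.submodule ≤ H) := by
      intro Q hQ
      rcases Finset.mem_union.mp hQ with h1 | h1
      · obtain ⟨hQT, hQf⟩ := Finset.mem_filter.mp h1
        refine Finset.mem_filter.mpr ⟨(Finset.mem_filter.mp hQT).1, ?_⟩
        rw [← hQf]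
        exact le_sup_right
      · obtain ⟨hQK, hQS⟩ := Finset.mem_filter.mp h1
        exact Finset.mem_filter.mpr ⟨hQK, le_trans hQS (hHSprop H hH).1⟩
    calc (T.filter (fun Q => f Q = H)).card + pointsOn K' S0
        = ((T.filter (fun Q => f Q = H)) ∪ K'.filter (fun Q => Q.submodule ≤ S0)).card :=
          (Finset.card_union_of_disjoint hdisj).symm
      _ ≤ pointsOn K' H := Finset.card_le_card hsub2
      _ ≤ r := hbound H (hHhyp H hH)
  have hTsum : T.card ≤ HS.card * (r - pointsOn K' S0) := by
    rw [Finset.card_eq_sum_card_fiberwise (fun x hx => Finset.mem_image_of_mem f hx)]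
    calc ∑ H ∈ HS, (T.filter (fun Q => f Q = H)).card
        ≤ ∑ _H ∈ HS, (r - pointsOn K' S0) :=
          Finset.sum_le_sum (fun H hH => by have := hfib H hH; omega)
      _ = HS.card * (r - pointsOn K' S0) := by simp [mul_comm]
  -- counting hyperplanes through S0
  have hcardW : ∀ W : Submodule F (Fin k → F),
      (Finset.univ.filter (fun v => v ∈ W)).card = q ^ (Module.finrank F W) := by
    intro W
    rw [← hq, ← Module.card_eq_pow_finrank (K := F) (V := ↥W), ← Fintype.card_subtype]
  set B0 : Finset (Fin k → F) := Finset.univ.filter (fun v => v ∈ S0) with hB0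
  have hB0card : B0.card = q ^ (k - 2) := by rw [hB0, hcardW, hS0rank]
  set gfin : Submodule F (Fin k → F) → Finset (Fin k → F) :=
    fun H => Finset.univ.filter (fun v => v ∈ H ∧ v ∉ S0) with hgfin
  have hgfin_eq : ∀ H, gfin H = (Finset.univ.filter (fun v => v ∈ H)) \ B0 := by
    intro H
    ext v
    simp only [hgfin, hB0, Finset.mem_filter, Finset.mem_sdiff, Finset.mem_univ, true_and]
  have hgcard : ∀ H ∈ HS, (gfin H).card = q ^ (k - 1) - q ^ (k - 2) := by
    intro H hH
    rw [hgfin_eq H, Finset.card_sdiff_of_subset, hcardW, (hHSprop H hH).2, hB0card]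
    intro v hv
    rw [hB0, Finset.mem_filter] at hv
    exact Finset.mem_filter.mpr ⟨Finset.mem_univ v, (hHSprop H hH).1 hv.2⟩
  have hdisjHS : ∀ H1 ∈ HS, ∀ H2 ∈ HS, H1 ≠ H2 → Disjoint (gfin H1) (gfin H2) := by
    intro H1 h1 H2 h2 hne12
    rw [Finset.disjoint_left]
    intro v hv1 hv2
    simp only [hgfin, Finset.mem_filter, Finset.mem_univ, true_and] at hv1 hv2
    have hinf : H1 ⊓ H2 = S0 := by
      have hle : S0 ≤ H1 ⊓ H2 := le_inf (hHSprop H1 h1).1 (hHSprop H2 h2).1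
      by_cases hc : Module.finrank F ↥(H1 ⊓ H2) ≤ k - 2
      · exact (Submodule.eq_of_le_of_finrank_le hle (by rw [hS0rank]; exact hc)).symm
      · exfalso
        have hfr1 : Module.finrank F ↥(H1 ⊓ H2) ≤ k - 1 := by
          rw [← (hHSprop H1 h1).2]
          exact Submodule.finrank_mono inf_le_left
        have h1e : H1 ⊓ H2 = H1 := Submodule.eq_of_le_of_finrank_le inf_le_left
          (by rw [(hHSprop H1 h1).2]; omega)
        have h2e : H1 ⊓ H2 = H2 := Submodule.eq_of_le_of_finrank_le inf_le_right
          (by rw [(hHSprop H2 h2).2]; omega)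
        exact hne12 (h1e.symm.trans h2e)
    have : v ∈ S0 := hinf ▸ (Submodule.mem_inf.mpr ⟨hv1.1, hv2.1⟩)
    exact hv1.2 this
  have hbig : HS.card * (q ^ (k - 1) - q ^ (k - 2)) ≤ q ^ k - q ^ (k - 2) := by
    have hcb : (HS.biUnion gfin).card = HS.card * (q ^ (k - 1) - q ^ (k - 2)) := by
      rw [Finset.card_biUnion hdisjHS, Finset.sum_congr rfl hgcard, Finset.sum_const,
        smul_eq_mul]
    have hsubU : HS.biUnion gfin ⊆ Finset.univ \ B0 := by
      intro v hv
      obtain ⟨H, hH, hvH⟩ := Finset.mem_biUnion.mp hv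
      simp only [hgfin, Finset.mem_filter, Finset.mem_univ, true_and] at hvH
      refine Finset.mem_sdiff.mpr ⟨Finset.mem_univ v, ?_⟩
      rw [hB0, Finset.mem_filter]
      tauto
    have hU : (Finset.univ \ B0).card = q ^ k - q ^ (k - 2) := by
      rw [Finset.card_sdiff_of_subset (Finset.subset_univ _), hB0card, Finset.card_univ,
        Module.card_eq_pow_finrank (K := F), hV, hq]
    calc HS.card * (q ^ (k - 1) - q ^ (k - 2)) = (HS.biUnion gfin).card := hcb.symm
      _ ≤ (Finset.univ \ B0).card := Finset.card_le_card hsubU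
      _ = q ^ k - q ^ (k - 2) := hU
  have hHScard : HS.card ≤ q + 1 := by
    by_contra hcon
    push_neg at hcon
    obtain ⟨kk, rfl⟩ : ∃ kk, k = kk + 3 := ⟨k - 3, by omega⟩
    set a := q ^ (kk + 1) with ha
    have ha1 : 1 ≤ a := Nat.one_le_pow _ _ (by omega)
    have ekm2 : kk + 3 - 2 = kk + 1 := rfl
    have ekm1 : kk + 3 - 1 = kk + 2 := rfl
    have e1 : q ^ (kk + 2) = a * q := by rw [ha, ← pow_succ]
    have e2 : q ^ (kk + 3) = a * q * q := by rw [ha, ← pow_succ, ← pow_succ]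
    rw [ekm1, ekm2, e1, e2] at hbig
    set X := a * q - a with hX
    set Y := a * q * q - a with hY
    have h2a : 2 * a ≤ a * q := by rw [mul_comm a q]; exact Nat.mul_le_mul_right a hq2
    have haq : a ≤ a * q := Nat.le_mul_of_pos_right a (by omega)
    have haqq : a ≤ a * q * q := le_trans haq (Nat.le_mul_of_pos_right _ (by omega))
    have s1 : X + a = a * q := by omega
    have s2 : Y + a = a * q * q := by omega
    have hXY : (q + 2) * X ≤ Y := by
      calc (q + 2) * X ≤ HS.card * X :=
            Nat.mul_le_mul_right X (show q + 2 ≤ HS.card by omega)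
        _ ≤ Y := hbig
    have hYe : Y = X * q + X := by
      have hb1 : a * q * q = (X + a) * q := by rw [s1]
      have hb2 : (X + a) * q = X * q + a * q := by ring
      omega
    have hexp : (q + 2) * X = X * q + 2 * X := by ring
    have hX1 : 1 ≤ X := by omega
    omega
  -- final arithmetic
  have hfinal1 : n + 1 ≤ pointsOn K' S0 + (q + 1) * (r - pointsOn K' S0) := by
    calc n + 1 = pointsOn K' S0 + T.card := hsplit.symm
      _ ≤ pointsOn K' S0 + HS.card * (r - pointsOn K' S0) := Nat.add_le_add_left hTsum _
      _ ≤ pointsOn K' S0 + (q + 1) * (r - pointsOn K' S0) :=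
          Nat.add_le_add_left (Nat.mul_le_mul_right _ hHScard) _
  set m := pointsOn K' S0 with hm
  set d := r - m with hdd
  have hd1 : m + d = r := by omega
  have hd2 : d ≤ s + 1 := by omega
  have e2 : (q + 1) * d = q * d + d := by ring
  have e3 : q * d ≤ q * (s + 1) := Nat.mul_le_mul_left q hd2
  have hn' : n + 2 = (s + 1) * (q + 1) + k := by
    rw [hn, Nat.sub_add_cancel (le_trans (by omega) (Nat.le_add_left k _))]
  have hr' : r + 1 = k + s := by omega
  have e4 : (s + 1) * (q + 1) = q * (s + 1) + s + 1 := by ring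
  clear hP0sub hbound hPmem hmkmem key hHhyp hHSprop hfib hdisjHS hcardW
  linarith [hfinal1, hd1, hd2, e2, e3, hn', hr', e4]

end
end

section
/- Let C be a non-degenerate linear [n, k, d]_q code with k ≥ 3 and Singleton defect s = n - k + 1 - d (i.e., C is an A^sMDS code). If n > s(q+1) + k - 1, then the minimum distance d⊥ of the dual code C⊥ satisfies d⊥ ≥ k; in particular, C is projective. -/
noncomputable section

/-- The Hamming weight of a vector. -/
def wt {F : Type*} [Field F] {n : ℕ} (x : Fin n → F) : ℕ :=
  Set.ncard {i | x i ≠ 0}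

/-- The linear code `C` has minimum (Hamming) distance `d`. -/
def HasMinDist {F : Type*} [Field F] {n : ℕ} (C : Submodule F (Fin n → F)) (d : ℕ) : Prop :=
  (∃ x ∈ C, x ≠ 0 ∧ wt x = d) ∧ ∀ x ∈ C, x ≠ 0 → d ≤ wt x

/-- The linear code `C` is non-degenerate: no coordinate vanishes on all codewords. -/
def Nondeg {F : Type*} [Field F] {n : ℕ} (C : Submodule F (Fin n → F)) : Prop :=
  ∀ i : Fin n, ∃ x ∈ C, x i ≠ 0

/-- The dual code of `C`, with respect to the standard bilinear form. -/
def dualCode {F : Type*} [Field F] {n : ℕ} (C : Submodule F (Fin n → F)) :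
    Submodule F (Fin n → F) where
  carrier := {y | ∀ x ∈ C, ∑ i, y i * x i = 0}
  add_mem' := by
    intro a b ha hb x hx
    simp only [Set.mem_setOf_eq] at ha hb
    simp [Pi.add_apply, add_mul, Finset.sum_add_distrib, ha x hx, hb x hx]
  zero_mem' := by
    intro x hx
    simp
  smul_mem' := by
    intro c a ha x hx
    simp only [Set.mem_setOf_eq] at ha
    simp [Pi.smul_apply, smul_eq_mul, mul_assoc, ← Finset.mul_sum, ha x hx]

open Finset Module

open scoped Classical

lemma wt_eq_card {F : Type*} [Field F] {n : ℕ} (x : Fin n → F) :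
    wt x = (Finset.univ.filter fun i => x i ≠ 0).card := by
  rw [wt, ← Set.ncard_coe_finset]
  congr 1
  ext i
  simp

lemma rank_split {F : Type*} [Field F] {n : ℕ} (V : Submodule F (Fin n → F))
    {M : Type*} [AddCommGroup M] [Module F M] (f : (Fin n → F) →ₗ[F] M) :
    finrank F (Submodule.map f V) + finrank F ↥(V ⊓ LinearMap.ker f) = finrank F ↥V := by
  have h := LinearMap.finrank_range_add_finrank_ker (f.comp V.subtype)
  rw [LinearMap.range_comp, Submodule.range_subtype, LinearMap.ker_comp] at h
  have h2 : finrank F ↥(V ⊓ LinearMap.ker f)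
      = finrank F ↥(Submodule.comap V.subtype (LinearMap.ker f)) := by
    rw [← Submodule.map_comap_subtype]
    exact Submodule.finrank_map_subtype_eq _ _
  rw [h2]
  exact h

lemma exists_low_wt {F : Type*} [Field F] {n : ℕ} (V : Submodule F (Fin n → F))
    (A : Finset (Fin n)) (hsupp : ∀ v ∈ V, ∀ i, i ∉ A → v i = 0)
    {r : ℕ} (hr1 : 1 ≤ r) (hr : r ≤ finrank F ↥V) :
    ∃ v ∈ V, v ≠ 0 ∧ wt v + r ≤ A.card + 1 := by
  have hVA : finrank F ↥V ≤ A.card := by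
    have hinj : Function.Injective
        ((LinearMap.funLeft F F (fun i : {i // i ∈ A} => (i : Fin n))).comp V.subtype) := by
      rw [← LinearMap.ker_eq_bot, LinearMap.ker_eq_bot']
      intro v hv
      ext1
      funext i
      by_cases hi : i ∈ A
      · exact congrFun hv ⟨i, hi⟩
      · exact hsupp v.1 v.2 i hi
    have := LinearMap.finrank_le_finrank_of_injective hinj
    simpa [Module.finrank_fintype_fun_eq_card] using this
  obtain ⟨B, hBA, hBcard⟩ := Finset.exists_subset_card_eq (show r - 1 ≤ A.card by omega)
  have hnotinj : ¬ Function.Injective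
      ((LinearMap.funLeft F F (fun i : {i // i ∈ B} => (i : Fin n))).comp V.subtype) := by
    intro hinj
    have := LinearMap.finrank_le_finrank_of_injective hinj
    rw [Module.finrank_fintype_fun_eq_card] at this
    simp only [Fintype.card_coe, hBcard] at this
    omega
  rw [← LinearMap.ker_eq_bot] at hnotinj
  obtain ⟨v, hvker, hv0⟩ := Submodule.exists_mem_ne_zero_of_ne_bot hnotinj
  refine ⟨v.1, v.2, by simpa using hv0, ?_⟩
  have hsub : (Finset.univ.filter fun i => v.1 i ≠ 0) ⊆ A \ B := by
    intro i hi
    simp only [Finset.mem_filter] at hi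
    rw [Finset.mem_sdiff]
    constructor
    · by_contra hiA
      exact hi.2 (hsupp v.1 v.2 i hiA)
    · intro hiB
      exact hi.2 (congrFun hvker ⟨i, hiB⟩)
  have h1 := Finset.card_le_card hsub
  rw [Finset.card_sdiff_of_subset hBA, hBcard] at h1
  rw [wt_eq_card]
  have h2 := Finset.card_le_card hBA
  omega

lemma avg_lemma {F : Type*} [Field F] [Fintype F] {n : ℕ} (x z : Fin n → F) (e : ℕ)
    (hx : (Finset.univ.filter fun i => x i ≠ 0).card = e)
    (hmin : ∀ α : F, e ≤ (Finset.univ.filter fun i => z i - α * x i ≠ 0).card) :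
    e ≤ Fintype.card F * (Finset.univ.filter fun i => x i = 0 ∧ z i ≠ 0).card := by
  set q := Fintype.card F with hq
  have hq1 : 1 ≤ q := Fintype.card_pos
  have hpt : ∀ i : Fin n, (∑ α : F, if z i - α * x i ≠ 0 then 1 else 0)
      = if x i ≠ 0 then q - 1 else (if z i ≠ 0 then q else 0) := by
    intro i
    by_cases hxi : x i = 0
    · simp only [hxi, mul_zero, sub_zero, ne_eq, not_true_eq_false, if_false,
        not_false_eq_true]
      by_cases hzi : z i = 0
      · simp [hzi]
      · simp [hzi, Finset.sum_const, hq]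
    · simp only [hxi, ne_eq, not_false_eq_true, if_true]
      have hone : (Finset.univ.filter fun α : F => z i - α * x i = 0) = {z i * (x i)⁻¹} := by
        ext α
        simp only [Finset.mem_filter, Finset.mem_univ, true_and, Finset.mem_singleton,
          sub_eq_zero]
        constructor
        · intro h
          field_simp
          linear_combination -h
        · intro h
          subst h
          field_simp
      have hcf : (∑ α : F, if z i - α * x i ≠ 0 then 1 else 0)
          = (Finset.univ.filter fun α : F => z i - α * x i ≠ 0).card := by
        rw [Finset.card_filter]
      rw [hcf]
      have := Finset.card_filter_add_card_filter_not
        (s := (Finset.univ : Finset F)) (p := fun α : F => z i - α * x i = 0)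
      rw [hone] at this
      simp only [Finset.card_singleton, Finset.card_univ, ← hq] at this
      have h2 : (Finset.univ.filter fun α : F => ¬ z i - α * x i = 0).card = q - 1 := by omega
      simpa using h2
  have htot : (∑ α : F, (Finset.univ.filter fun i => z i - α * x i ≠ 0).card)
      = (q - 1) * e + q * (Finset.univ.filter fun i => x i = 0 ∧ z i ≠ 0).card := by
    have hsw : (∑ α : F, (Finset.univ.filter fun i => z i - α * x i ≠ 0).card)
        = ∑ i : Fin n, (∑ α : F, if z i - α * x i ≠ 0 then 1 else 0) := by
      rw [Finset.sum_comm]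
      congr 1
      ext α
      rw [Finset.card_filter]
    rw [hsw]
    have hpt2 : ∀ i : Fin n, (∑ α : F, if z i - α * x i ≠ 0 then 1 else 0)
        = ((if x i ≠ 0 then q - 1 else 0) + if x i = 0 ∧ z i ≠ 0 then q else 0) := by
      intro i
      rw [hpt i]
      by_cases hxi : x i = 0 <;> by_cases hzi : z i = 0 <;> simp [hxi, hzi]
    rw [Finset.sum_congr rfl (fun i _ => hpt2 i), Finset.sum_add_distrib]
    congr 1
    · rw [Finset.sum_ite, Finset.sum_const, Finset.sum_const]
      simp [hx, mul_comm]
    · rw [Finset.sum_ite, Finset.sum_const, Finset.sum_const]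
      simp [mul_comm]
  have hlow : q * e ≤ ∑ α : F, (Finset.univ.filter fun i => z i - α * x i ≠ 0).card := by
    calc q * e = ∑ _α : F, e := by rw [Finset.sum_const, Finset.card_univ, smul_eq_mul, ← hq]
    _ ≤ _ := Finset.sum_le_sum fun α _ => hmin α
  rw [htot] at hlow
  have he : e ≤ q * e := Nat.le_mul_of_pos_left e hq1
  have hsplit : (q - 1) * e + e = q * e := by
    rw [Nat.sub_one_mul]
    omega
  omega

lemma key_lemma {F : Type*} [Field F] [Fintype F] {n k d : ℕ}
    (C : Submodule F (Fin n → F)) (hdim : finrank F ↥C = k)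
    (hd : HasMinDist C d) (y : Fin n → F) (hyd : y ∈ dualCode C)
    (hy0 : y ≠ 0) (hyw : wt y + 1 ≤ k) :
    ∃ e W : ℕ, d ≤ e ∧ e ≤ Fintype.card F * W ∧ W + e + k ≤ n + 1 := by
  set S : Finset (Fin n) := Finset.univ.filter fun i => y i ≠ 0 with hS
  have hw : S.card = wt y := (wt_eq_card y).symm
  set ρ : (Fin n → F) →ₗ[F] ({i // i ∈ S} → F) :=
    LinearMap.funLeft F F (fun i : {i // i ∈ S} => (i : Fin n)) with hρ
  set D := C ⊓ LinearMap.ker ρ with hD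
  have hDmem : ∀ z ∈ D, ∀ i ∈ S, z i = 0 := by
    intro z hz i hi
    exact congrFun (LinearMap.mem_ker.mp hz.2) ⟨i, hi⟩
  have hsplit1 := rank_split C ρ
  rw [hdim, ← hD] at hsplit1
  -- the functional ℓ
  obtain ⟨i0, hi0⟩ : ∃ i0, y i0 ≠ 0 := Function.ne_iff.mp hy0
  have hi0S : i0 ∈ S := by simp [hS, hi0]
  set ℓ : ({i // i ∈ S} → F) →ₗ[F] F :=
    { toFun := fun u => ∑ i : {i // i ∈ S}, y i.1 * u i
      map_add' := by
        intro u v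
        simp [mul_add, Finset.sum_add_distrib]
      map_smul' := by
        intro c u
        simp [Finset.mul_sum, mul_left_comm] } with hℓ
  have hmapsub : Submodule.map ρ C ≤ LinearMap.ker ℓ := by
    rintro _ ⟨x, hx, rfl⟩
    rw [LinearMap.mem_ker]
    show ∑ i : {i // i ∈ S}, y i.1 * x i.1 = 0
    rw [Finset.sum_coe_sort S (fun i => y i * x i)]
    have h0 := hyd x hx
    rw [← h0]
    exact Finset.sum_subset (Finset.subset_univ S) (fun i _ hiS => by
      have hyi : y i = 0 := by
        by_contra hh
        exact hiS (by simp [hS, hh])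
      simp [hyi])
  have hℓtop : LinearMap.range ℓ = ⊤ := by
    rw [LinearMap.range_eq_top]
    intro c
    refine ⟨fun i => if i = ⟨i0, hi0S⟩ then c * (y i0)⁻¹ else 0, ?_⟩
    show (∑ i : {i // i ∈ S}, y i.1 * if i = ⟨i0, hi0S⟩ then c * (y i0)⁻¹ else 0) = c
    rw [Finset.sum_eq_single (⟨i0, hi0S⟩ : {i // i ∈ S})]
    · rw [if_pos rfl]
      field_simp
    · intro b _ hb
      simp [hb]
    · intro hmem
      exact absurd (Finset.mem_univ _) hmem
  have hkerℓ := LinearMap.finrank_range_add_finrank_ker ℓ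
  rw [hℓtop, finrank_top, Module.finrank_self, Module.finrank_fintype_fun_eq_card,
    Fintype.card_coe] at hkerℓ
  have hmaple : finrank F ↥(Submodule.map ρ C) ≤ finrank F ↥(LinearMap.ker ℓ) :=
    Submodule.finrank_mono hmapsub
  set kD := finrank F ↥D with hkD
  have hkk : k + 1 ≤ S.card + kD := by omega
  have hSk : S.card + 1 ≤ k := by omega
  have hkD2 : 2 ≤ kD := by omega
  -- a nonzero element of D
  have hnontriv : Nontrivial ↥D := by
    rw [← Module.finrank_pos_iff (R := F)]
    omega
  obtain ⟨v, hv⟩ := exists_ne (0 : ↥D)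
  -- minimum weight of D
  have hEne : {e : ℕ | ∃ z ∈ D, z ≠ 0 ∧ wt z = e}.Nonempty :=
    ⟨wt v.1, v.1, v.2, by simpa using hv, rfl⟩
  set dD := sInf {e : ℕ | ∃ z ∈ D, z ≠ 0 ∧ wt z = e} with hdD
  obtain ⟨x, hxD, hx0, hxw⟩ := Nat.sInf_mem hEne
  have hmin : ∀ z ∈ D, z ≠ 0 → dD ≤ wt z := fun z hz h0 => Nat.sInf_le ⟨z, hz, h0, rfl⟩
  have hddd : d ≤ dD := by
    rw [hdD, ← hxw]
    exact hd.2 x hxD.1 hx0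
  set T : Finset (Fin n) := Finset.univ.filter fun i => x i ≠ 0 with hT
  have hTcard : T.card = dD := by
    rw [hdD, ← hxw, wt_eq_card]
  have hTS : ∀ i ∈ T, i ∉ S := fun i hi his =>
    (Finset.mem_filter.mp hi).2 (hDmem x hxD i his)
  set ψ : (Fin n → F) →ₗ[F] (Fin n → F) :=
    LinearMap.pi (fun i => if i ∈ T then 0 else LinearMap.proj i) with hψdef
  have hψ : ∀ (z : Fin n → F) (i : Fin n), ψ z i = if i ∈ T then 0 else z i := by
    intro z i
    rw [hψdef, LinearMap.pi_apply]
    by_cases h : i ∈ T <;> simp [h]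
  have hψx : ψ x = 0 := by
    funext i
    rw [hψ]
    by_cases h : i ∈ T
    · simp [h]
    · have : x i = 0 := by
        by_contra hh
        exact h (by simp [hT, hh])
      simp [h, this]
  have hker : D ⊓ LinearMap.ker ψ ≤ Submodule.span F {x} := by
    rintro z ⟨hzD, hzk⟩
    have hzT : ∀ i, i ∉ T → z i = 0 := by
      intro i hi
      have h0 := congrFun (LinearMap.mem_ker.mp hzk) i
      rw [hψ] at h0
      simpa [hi] using h0
    obtain ⟨i1, hi1⟩ : ∃ i1, x i1 ≠ 0 := Function.ne_iff.mp hx0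
    have hi1T : i1 ∈ T := by simp [hT, hi1]
    set c := z i1 * (x i1)⁻¹ with hc
    have hzc : z - c • x = 0 := by
      by_contra hne
      have h1 : dD ≤ wt (z - c • x) := hmin _ (D.sub_mem hzD (D.smul_mem c hxD)) hne
      have h2 : wt (z - c • x) ≤ (T.erase i1).card := by
        rw [wt_eq_card]
        apply Finset.card_le_card
        intro i hi
        simp only [Finset.mem_filter, Finset.mem_univ, true_and, Pi.sub_apply,
          Pi.smul_apply, smul_eq_mul] at hi
        rw [Finset.mem_erase]
        constructor
        · intro heq
          apply hi
          rw [heq, hc]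
          field_simp
          ring
        · by_contra hiT
          apply hi
          rw [hzT i hiT]
          have : x i = 0 := by
            by_contra hh
            exact hiT (by simp [hT, hh])
          rw [this]
          ring
      rw [Finset.card_erase_of_mem hi1T, hTcard] at h2
      have hd1 : 1 ≤ dD := by
        rw [← hTcard]
        exact Finset.card_pos.mpr ⟨i1, hi1T⟩
      omega
    rw [Submodule.mem_span_singleton]
    exact ⟨c, by rw [sub_eq_zero] at hzc; exact hzc.symm⟩
  have hkerle : finrank F ↥(D ⊓ LinearMap.ker ψ) ≤ 1 := by
    have h1 := Submodule.finrank_mono hker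
    rwa [finrank_span_singleton hx0] at h1
  have hsplit2 := rank_split D ψ
  rw [← hkD] at hsplit2
  set A : Finset (Fin n) := (Finset.univ \ S) \ T with hA
  have hsuppR : ∀ v ∈ Submodule.map ψ D, ∀ i, i ∉ A → v i = 0 := by
    rintro _ ⟨z, hzD, rfl⟩ i hiA
    rw [hψ]
    by_cases hiT : i ∈ T
    · simp [hiT]
    · simp only [hiT, if_false]
      have hiS : i ∈ S := by
        by_contra hiS
        exact hiA (by simp [hA, Finset.mem_sdiff, hiS, hiT])
      exact hDmem z hzD i hiS
  have hrR : kD - 1 ≤ finrank F ↥(Submodule.map ψ D) := by omega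
  obtain ⟨r0, hr0R, hr00, hr0w⟩ :=
    exists_low_wt _ A hsuppR (show 1 ≤ kD - 1 by omega) hrR
  obtain ⟨z, hzD, hzeq⟩ := hr0R
  have hWeq : wt r0 = (Finset.univ.filter fun i => x i = 0 ∧ z i ≠ 0).card := by
    rw [wt_eq_card]
    congr 1
    ext i
    simp only [Finset.mem_filter, Finset.mem_univ, true_and, ← hzeq, hψ]
    by_cases hiT : i ∈ T
    · have hxi : x i ≠ 0 := (Finset.mem_filter.mp hiT).2
      simp [hiT, hxi]
    · have hxi : x i = 0 := by
        by_contra hh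
        exact hiT (by simp [hT, hh])
      simp [hiT, hxi]
  have havg : dD ≤ Fintype.card F * wt r0 := by
    rw [hWeq]
    apply avg_lemma x z dD
    · rw [← hTcard, hT]
    · intro α
      have hne : z - α • x ≠ 0 := by
        intro h
        apply hr00
        rw [← hzeq]
        have hz' : z = α • x := by rwa [sub_eq_zero] at h
        rw [hz', map_smul, hψx, smul_zero]
      have h1 := hmin _ (D.sub_mem hzD (D.smul_mem α hxD)) hne
      rw [wt_eq_card] at h1
      simpa [Pi.sub_apply, Pi.smul_apply, smul_eq_mul] using h1
  -- cardinalities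
  have hcard1 : (Finset.univ \ S).card = n - S.card := by
    rw [Finset.card_sdiff_of_subset (Finset.subset_univ S), Finset.card_univ, Fintype.card_fin]
  have hTsub : T ⊆ Finset.univ \ S := by
    intro i hi
    rw [Finset.mem_sdiff]
    exact ⟨Finset.mem_univ i, hTS i hi⟩
  have hcard2 : A.card = (Finset.univ \ S).card - T.card := Finset.card_sdiff_of_subset hTsub
  have hcard3 : T.card ≤ (Finset.univ \ S).card := Finset.card_le_card hTsub
  have hcard4 : S.card ≤ n := by
    have := Finset.card_le_card (Finset.subset_univ S)
    simpa using this
  refine ⟨dD, wt r0, hddd, havg, ?_⟩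
  omega

/-- If `C` is a non-degenerate `AˢMDS` `[n,k,d]_q` code with `k ≥ 3` and
`n > s(q+1) + k - 1`, then the dual minimum distance satisfies `d⊥ ≥ k`; in
particular `C` is projective (no two coordinates of `C` are proportional, i.e. the
columns of a generator matrix are pairwise distinct points of `PG(k-1,q)`). -/
theorem stmt15 {F : Type*} [Field F] [Fintype F] {q n k d s : ℕ}
    (hq : Fintype.card F = q) (hk : 3 ≤ k)
    (C : Submodule F (Fin n → F))
    (hdim : Module.finrank F C = k) (hnd : Nondeg C) (hd : HasMinDist C d)
    (hsdef : n + 1 = k + d + s)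
    (hn : s * (q + 1) + k - 1 < n) :
    (∀ y ∈ dualCode C, y ≠ 0 → k ≤ wt y) ∧
    (∀ i j : Fin n, i ≠ j → ¬ ∃ c : F, ∀ x ∈ C, x j = c * x i) := by
  have hsq : s * (q + 1) = s * q + s := by ring
  have hqd : s * q < d := by omega
  have part1 : ∀ y ∈ dualCode C, y ≠ 0 → k ≤ wt y := by
    intro y hy hy0
    by_contra hlt
    push_neg at hlt
    obtain ⟨e, W, h1, h2, h3⟩ := key_lemma C hdim hd y hy hy0 (by omega)
    rw [hq] at h2
    have hWs : W ≤ s := by omega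
    have h4 : q * W ≤ q * s := Nat.mul_le_mul_left q hWs
    have h5 : q * s = s * q := mul_comm q s
    omega
  refine ⟨part1, ?_⟩
  rintro i j hij ⟨c, hc⟩
  set y : Fin n → F := fun t => if t = i then c else if t = j then -1 else 0 with hy
  have hyd : y ∈ dualCode C := by
    intro x hx
    have hterm : ∀ t, y t * x t =
        (if t = i then c * x i else 0) + (if t = j then -(x j) else 0) := by
      intro t
      by_cases h1 : t = i
      · subst h1
        simp [hy, hij]
      · by_cases h2 : t = j
        · subst h2
          simp [hy, h1]
        · simp [hy, h1, h2]
    rw [Finset.sum_congr rfl (fun t _ => hterm t), Finset.sum_add_distrib]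
    rw [Finset.sum_ite_eq' Finset.univ i (fun _ => c * x i),
      Finset.sum_ite_eq' Finset.univ j (fun _ => -(x j))]
    simp [hc x hx]
  have hy0 : y ≠ 0 := by
    intro h
    have h2 : (if j = i then c else if j = j then -1 else (0:F)) = 0 := congrFun h j
    rw [if_neg (fun hh : j = i => hij hh.symm), if_pos rfl] at h2
    exact neg_ne_zero.mpr one_ne_zero h2
  have hwty : wt y ≤ 2 := by
    have hsub : {t | y t ≠ 0} ⊆ {i, j} := by
      intro t ht
      simp only [Set.mem_setOf_eq, hy] at ht
      by_cases h1 : t = i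
      · simp [h1]
      · by_cases h2 : t = j
        · simp [h2]
        · exfalso
          apply ht
          simp [h1, h2]
    calc wt y ≤ Set.ncard {i, j} := Set.ncard_le_ncard hsub (Set.toFinite _)
    _ ≤ 2 := by
        have := Set.ncard_insert_le i {j}
        simpa [Set.ncard_singleton] using this
  have := part1 y hyd hy0
  omega

end
end
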